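/- arXiv:1605.04769 — 7 statements merged into one kernel-verified Lean document; each statement's English description precedes it below -/
import Mathlib

section
/- The ideal I_W equals the ideal generated by the set of all products h1^{a1} h2^{a2} v1^{b1} v2^{b2} with a1, a2, b1, b2 nonnegative integers satisfying a1 + b1 ≥ m11, a1 + b2 ≥ m12 and a2 + b1 ≥ m21. -/
/-!
The substitution `x₀, x₁, x₂, x₃ ↦ h₁, h₂, v₁, v₂` is an automorphism of `k[x₀, x₁, x₂, x₃]`: by
linear independence the `hᵢ` span the same space of linear forms as `x₀, x₁` (and likewise for
the `vᵢ`), so it is surjective, hence injective because the ring is Noetherian. It transports the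
problem to coordinate lines, where every ideal involved is a monomial ideal: `(xᵢ, xⱼ)^m` consists
of the polynomials all of whose exponents satisfy `m ≤ eᵢ + eⱼ`, so the intersection is cut out by
the three inequalities together, i.e. spanned by the monomials `x₀^a₁ x₁^a₂ x₂^b₁ x₃^b₂`.
-/

open MvPolynomial

theorem RingHom.injective_of_surjective_of_isNoetherianRing {R : Type*} [Ring R]
    [IsNoetherianRing R] (f : R →+* R) (hf : Function.Surjective f) : Function.Injective f := by
  obtain ⟨n, hn⟩ := monotone_stabilizes_iff_noetherian.mpr inferInstance
    ⟨fun n => RingHom.ker (f ^ n), monotone_nat_of_le_succ fun n x hx => by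
      simp_all [RingHom.mem_ker, pow_succ']⟩
  rw [injective_iff_map_eq_zero]
  intro x hx
  obtain ⟨y, rfl⟩ : ∃ y, (f ^ n) y = x := by
    rw [RingHom.coe_pow]
    exact hf.iterate n x
  have hy : y ∈ RingHom.ker (f ^ (n + 1)) := by
    rwa [RingHom.mem_ker, pow_succ', RingHom.coe_mul, Function.comp_apply]
  have hker : RingHom.ker (f ^ (n + 1)) = RingHom.ker (f ^ n) := (hn (n + 1) n.le_succ).symm
  rwa [hker] at hy

theorem Submodule.span_pair_eq_of_linearIndependent {K V : Type*} [DivisionRing K]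
    [AddCommGroup V] [Module K V] {x y u v : V} (hu : u ∈ span K {x, y})
    (hv : v ∈ span K {x, y}) (huv : LinearIndependent K ![u, v]) :
    span K {u, v} = span K {x, y} := by
  have := FiniteDimensional.span_of_finite K (Set.toFinite {x, y})
  refine eq_of_le_of_finrank_le (span_le.mpr (Set.pair_subset hu hv)) ?_
  rw [← Matrix.range_cons_cons_empty x y ![], ← Matrix.range_cons_cons_empty u v ![],
    finrank_span_eq_card huv]
  exact finrank_range_le_card _

namespace MvPolynomial

variable {σ R : Type*}

section CommSemiring

variable [CommSemiring R]

theorem aeval_surjective_of_X_mem_adjoin {F : σ → MvPolynomial σ R}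
    (hF : ∀ i, X i ∈ Algebra.adjoin R (Set.range F)) : Function.Surjective (aeval (R := R) F) := by
  rw [← AlgHom.range_eq_top, aeval_range, eq_top_iff, ← adjoin_range_X, Algebra.adjoin_le_iff]
  rintro _ ⟨i, rfl⟩
  exact hF i

theorem mem_restrictSupportIdeal {s : Set (σ →₀ ℕ)} {hs : IsUpperSet s} {p : MvPolynomial σ R} :
    p ∈ restrictSupportIdeal R s hs ↔ ↑p.support ⊆ s := Iff.rfl

theorem restrictSupportIdeal_inf {s t : Set (σ →₀ ℕ)} (hs : IsUpperSet s) (ht : IsUpperSet t) :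
    restrictSupportIdeal R s hs ⊓ restrictSupportIdeal R t ht =
      restrictSupportIdeal R (s ∩ t) (hs.inter ht) := by
  ext p
  simp [mem_restrictSupportIdeal]

theorem restrictSupportIdeal_eq_span {s : Set (σ →₀ ℕ)} (hs : IsUpperSet s) :
    restrictSupportIdeal R s hs = Ideal.span ((monomial · 1) '' s) := by
  refine le_antisymm (fun p hp => ?_) (Ideal.span_le.mpr ?_)
  · have : p ∈ restrictSupport R s := hp
    rw [restrictSupport_eq_span] at this
    exact Submodule.span_le_restrictScalars R _ _ this
  · rintro _ ⟨x, hx, rfl⟩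
    exact (monomial_mem_restrictSupport (R := R)).mpr (Or.inl hx)

theorem isUpperSet_setOf_le_add (i j : σ) (m : ℕ) : IsUpperSet {x : σ →₀ ℕ | m ≤ x i + x j} :=
  fun _ _ hxy hx => hx.trans (add_le_add (hxy i) (hxy j))

theorem span_X_pair_pow {i j : σ} (hij : i ≠ j) (m : ℕ) :
    Ideal.span {X i, X j} ^ m =
      restrictSupportIdeal R {x | m ≤ x i + x j} (isUpperSet_setOf_le_add i j m) := by
  classical
  refine le_antisymm ?_ ?_
  · induction m with
    | zero =>
      rw [pow_zero, Ideal.one_eq_top, top_le_iff, Ideal.eq_top_iff_one, mem_restrictSupportIdeal]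
      exact fun _ _ => Nat.zero_le _
    | succ m ih =>
      rw [pow_succ]
      refine (Ideal.mul_mono_left ih).trans (Ideal.mul_le.mpr fun p hp q hq => ?_)
      obtain ⟨a, b, rfl⟩ := Ideal.mem_span_pair.mp hq
      rw [mul_add, mul_left_comm, mul_left_comm p]
      refine add_mem (Ideal.mul_mem_left _ _ ?_) (Ideal.mul_mem_left _ _ ?_) <;>
      · rw [mem_restrictSupportIdeal, support_mul_X]
        intro x hx
        obtain ⟨y, hy, rfl⟩ := Finset.mem_map.mp hx
        have := hp hy
        simp only [Set.mem_ofPred_eq, addRightEmbedding_apply, Finsupp.add_apply,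
          Finsupp.single_apply, if_neg hij, if_neg hij.symm, if_true] at this ⊢
        omega
  · rw [restrictSupportIdeal_eq_span, Ideal.span_le]
    rintro _ ⟨x, hx, rfl⟩
    obtain ⟨a, b, rfl, ha, hb⟩ : ∃ a b, a + b = m ∧ a ≤ x i ∧ b ≤ x j :=
      ⟨min (x i) m, m - min (x i) m, by omega, min_le_left _ _, by simp at hx; omega⟩
    have hmem : X i ^ a * X j ^ b ∈ Ideal.span ({X i, X j} : Set (MvPolynomial σ R)) ^ (a + b) := by
      rw [pow_add]
      exact Ideal.mul_mem_mul (Ideal.pow_mem_pow (Ideal.subset_span (by simp)) _)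
        (Ideal.pow_mem_pow (Ideal.subset_span (by simp)) _)
    have hdvd : X i ^ a * X j ^ b ∣ (monomial x 1 : MvPolynomial σ R) := by
      rw [X_pow_eq_monomial, X_pow_eq_monomial, monomial_mul, one_mul, monomial_dvd_monomial]
      refine ⟨Or.inr fun l => ?_, one_dvd _⟩
      simp only [Finsupp.add_apply, Finsupp.single_apply]
      split_ifs <;> subst_vars <;> first | omega | exact (hij rfl).elim
    exact Ideal.mem_of_dvd _ hdvd hmem

theorem monomial_one_eq_fin_four (x : Fin 4 →₀ ℕ) :
    (monomial x 1 : MvPolynomial (Fin 4) R) = X 0 ^ x 0 * X 1 ^ x 1 * X 2 ^ x 2 * X 3 ^ x 3 := by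
  rw [monomial_eq, C_1, one_mul, Finsupp.prod_fintype _ _ fun _ => pow_zero _, Fin.prod_univ_four]

end CommSemiring

theorem aeval_bijective_of_X_mem_adjoin [Finite σ] [CommRing R] [IsNoetherianRing R]
    {F : σ → MvPolynomial σ R} (hF : ∀ i, X i ∈ Algebra.adjoin R (Set.range F)) :
    Function.Bijective (aeval (R := R) F) :=
  have hsurj := aeval_surjective_of_X_mem_adjoin hF
  ⟨RingHom.injective_of_surjective_of_isNoetherianRing (aeval F).toRingHom hsurj, hsurj⟩

end MvPolynomial

section ThreePoints

variable {R S : Type*} [CommSemiring R] [CommSemiring S]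

def threePointIdeal (x₁ x₂ y₁ y₂ : R) (m₁₁ m₁₂ m₂₁ : ℕ) : Ideal R :=
  Ideal.span {x₁, y₁} ^ m₁₁ ⊓ Ideal.span {x₁, y₂} ^ m₁₂ ⊓ Ideal.span {x₂, y₁} ^ m₂₁

def threePointGenerators (x₁ x₂ y₁ y₂ : R) (m₁₁ m₁₂ m₂₁ : ℕ) : Set R :=
  {f | ∃ a₁ a₂ b₁ b₂ : ℕ, m₁₁ ≤ a₁ + b₁ ∧ m₁₂ ≤ a₁ + b₂ ∧ m₂₁ ≤ a₂ + b₁ ∧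
    f = x₁ ^ a₁ * x₂ ^ a₂ * y₁ ^ b₁ * y₂ ^ b₂}

theorem map_threePointIdeal (e : R ≃+* S) (x₁ x₂ y₁ y₂ : R) (m₁₁ m₁₂ m₂₁ : ℕ) :
    (threePointIdeal x₁ x₂ y₁ y₂ m₁₁ m₁₂ m₂₁).map e =
      threePointIdeal (e x₁) (e x₂) (e y₁) (e y₂) m₁₁ m₁₂ m₂₁ := by
  simp only [threePointIdeal, ← Ideal.comap_symm, Ideal.comap_inf]
  simp only [Ideal.comap_symm, Ideal.map_pow, Ideal.map_span, Set.image_pair]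

theorem image_threePointGenerators {F : Type*} [FunLike F R S] [MonoidHomClass F R S] (f : F)
    (x₁ x₂ y₁ y₂ : R) (m₁₁ m₁₂ m₂₁ : ℕ) :
    f '' threePointGenerators x₁ x₂ y₁ y₂ m₁₁ m₁₂ m₂₁ =
      threePointGenerators (f x₁) (f x₂) (f y₁) (f y₂) m₁₁ m₁₂ m₂₁ := by
  ext g
  simp only [threePointGenerators, Set.mem_image, Set.mem_ofPred_eq]
  constructor
  · rintro ⟨_, ⟨a₁, a₂, b₁, b₂, h₁₁, h₁₂, h₂₁, rfl⟩, rfl⟩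
    exact ⟨a₁, a₂, b₁, b₂, h₁₁, h₁₂, h₂₁, by simp only [map_mul, map_pow]⟩
  · rintro ⟨a₁, a₂, b₁, b₂, h₁₁, h₁₂, h₂₁, rfl⟩
    exact ⟨_, ⟨a₁, a₂, b₁, b₂, h₁₁, h₁₂, h₂₁, rfl⟩, by simp only [map_mul, map_pow]⟩

theorem threePointIdeal_X_eq_span (m₁₁ m₁₂ m₂₁ : ℕ) :
    threePointIdeal (X 0 : MvPolynomial (Fin 4) R) (X 1) (X 2) (X 3) m₁₁ m₁₂ m₂₁ =
      Ideal.span (threePointGenerators (X 0) (X 1) (X 2) (X 3) m₁₁ m₁₂ m₂₁) := by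
  rw [threePointIdeal, span_X_pair_pow (by decide), span_X_pair_pow (by decide),
    span_X_pair_pow (by decide), restrictSupportIdeal_inf, restrictSupportIdeal_inf,
    restrictSupportIdeal_eq_span]
  congr 1
  ext f
  constructor
  · rintro ⟨x, ⟨⟨h₁₁, h₁₂⟩, h₂₁⟩, rfl⟩
    exact ⟨x 0, x 1, x 2, x 3, h₁₁, h₁₂, h₂₁, monomial_one_eq_fin_four x⟩
  · rintro ⟨a₁, a₂, b₁, b₂, h₁₁, h₁₂, h₂₁, rfl⟩
    exact ⟨Finsupp.equivFunOnFinite.symm ![a₁, a₂, b₁, b₂],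
      ⟨⟨by simpa, by simpa⟩, by simpa⟩, by simp [monomial_one_eq_fin_four]⟩

end ThreePoints

theorem exists_algEquiv_X_eq_of_linearIndependent {k : Type*} [Field k]
    {h₁ h₂ v₁ v₂ : MvPolynomial (Fin 4) k}
    (hh₁ : h₁ ∈ Submodule.span k {X 0, X 1}) (hh₂ : h₂ ∈ Submodule.span k {X 0, X 1})
    (hh : LinearIndependent k ![h₁, h₂])
    (hv₁ : v₁ ∈ Submodule.span k {X 2, X 3}) (hv₂ : v₂ ∈ Submodule.span k {X 2, X 3})
    (hv : LinearIndependent k ![v₁, v₂]) :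
    ∃ e : MvPolynomial (Fin 4) k ≃ₐ[k] MvPolynomial (Fin 4) k,
      e (X 0) = h₁ ∧ e (X 1) = h₂ ∧ e (X 2) = v₁ ∧ e (X 3) = v₂ := by
  have hX : ∀ i, X i ∈ Submodule.span k {h₁, h₂} ⊔ Submodule.span k {v₁, v₂} := by
    rw [Submodule.span_pair_eq_of_linearIndependent hh₁ hh₂ hh,
      Submodule.span_pair_eq_of_linearIndependent hv₁ hv₂ hv]
    intro i
    fin_cases i
    exacts [Submodule.mem_sup_left (Submodule.subset_span (by simp)),
      Submodule.mem_sup_left (Submodule.subset_span (by simp)),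
      Submodule.mem_sup_right (Submodule.subset_span (by simp)),
      Submodule.mem_sup_right (Submodule.subset_span (by simp))]
  have hle : Submodule.span k {h₁, h₂} ⊔ Submodule.span k {v₁, v₂} ≤
      Submodule.span k (Set.range ![h₁, h₂, v₁, v₂]) :=
    sup_le (Submodule.span_mono (by simp [Set.insert_subset_iff]))
      (Submodule.span_mono (by simp [Set.insert_subset_iff]))
  refine ⟨AlgEquiv.ofBijective _ (aeval_bijective_of_X_mem_adjoin fun i =>
    Algebra.span_le_adjoin k _ (hle (hX i))), ?_⟩
  simp

/-- Proposition 2.6 (generator description): `I_W` is generated by the products of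
powers of the four lines whose exponents satisfy the three vanishing conditions. -/
theorem fat_three_points_generated_by_products
    {k : Type*} [Field k]
    (h1 h2 v1 v2 : MvPolynomial (Fin 4) k)
    (hh1 : h1 ∈ Submodule.span k ({X 0, X 1} : Set (MvPolynomial (Fin 4) k)))
    (hh2 : h2 ∈ Submodule.span k ({X 0, X 1} : Set (MvPolynomial (Fin 4) k)))
    (hhind : LinearIndependent k ![h1, h2])
    (hv1 : v1 ∈ Submodule.span k ({X 2, X 3} : Set (MvPolynomial (Fin 4) k)))
    (hv2 : v2 ∈ Submodule.span k ({X 2, X 3} : Set (MvPolynomial (Fin 4) k)))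
    (hvind : LinearIndependent k ![v1, v2])
    (m11 m12 m21 : ℕ)
    (IW : Ideal (MvPolynomial (Fin 4) k))
    (hIW : IW = Ideal.span {h1, v1} ^ m11 ⊓ Ideal.span {h1, v2} ^ m12 ⊓
        Ideal.span {h2, v1} ^ m21) :
    IW = Ideal.span { f : MvPolynomial (Fin 4) k |
      ∃ a1 a2 b1 b2 : ℕ, m11 ≤ a1 + b1 ∧ m12 ≤ a1 + b2 ∧ m21 ≤ a2 + b1 ∧
        f = h1 ^ a1 * h2 ^ a2 * v1 ^ b1 * v2 ^ b2 } := by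
  obtain ⟨e, he₀, he₁, he₂, he₃⟩ :=
    exists_algEquiv_X_eq_of_linearIndependent hh1 hh2 hhind hv1 hv2 hvind
  have hmap := congrArg (Ideal.map e.toRingEquiv) (threePointIdeal_X_eq_span (R := k) m11 m12 m21)
  rw [map_threePointIdeal, Ideal.map_span, image_threePointGenerators] at hmap
  simp only [AlgEquiv.coe_ringEquiv, he₀, he₁, he₂, he₃] at hmap
  exact hIW.trans hmap
end

section
/- The ideal I_W admits a minimal generating set each of whose elements is a product of powers of the four linear forms, i.e. there exists a finite set S of polynomials of the form h1^{a1} h2^{a2} v1^{b1} v2^{b2} (with a1,a2,b1,b2 nonnegative integers) such that S generates I_W and no proper subset of S generates I_W. -/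
open MvPolynomial

section Aux

open Pointwise

/-- A surjective ring endomorphism of a Noetherian commutative ring is injective. -/
theorem aux_inj_of_surj {A : Type*} [CommRing A] [IsNoetherianRing A]
    (f : A →+* A) (hf : Function.Surjective f) : Function.Injective f := by
  have hsurj : ∀ n : ℕ, Function.Surjective (f ^ n) := by
    intro n
    rw [RingHom.coe_pow]
    exact Function.Surjective.iterate hf n
  have hmono : Monotone fun n : ℕ => (RingHom.ker (f ^ n) : Ideal A) := by
    apply monotone_nat_of_le_succ
    intro n x hx
    have hx' : (⇑f)^[n] x = 0 := hx
    show (f ^ (n + 1)) x = 0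
    show (⇑f)^[n + 1] x = 0
    rw [Function.iterate_succ', Function.comp_apply, hx', map_zero]
  obtain ⟨n, hn⟩ := (monotone_stabilizes_iff_noetherian.mpr inferInstance)
    (⟨fun n : ℕ => (RingHom.ker (f ^ n) : Ideal A), hmono⟩ : ℕ →o Ideal A)
  rw [injective_iff_map_eq_zero]
  intro x hx
  obtain ⟨y, hy⟩ := hsurj n x
  have hy1 : y ∈ RingHom.ker (f ^ (n + 1)) := by
    show (⇑f)^[n + 1] y = 0
    rw [Function.iterate_succ', Function.comp_apply]
    have hy' : (⇑f)^[n] y = x := hy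
    rw [hy']
    exact hx
  have hmem : y ∈ RingHom.ker (f ^ n) := by
    have heq := hn (n + 1) (Nat.le_succ n)
    simp only [OrderHom.coe_mk] at heq
    rw [heq]
    exact hy1
  have hzero : (⇑f)^[n] y = 0 := hmem
  have hy' : (⇑f)^[n] y = x := hy
  rw [← hy', hzero]

/-- Two linearly independent vectors in a span of a pair span the same submodule. -/
theorem aux_span_pair_eq {k V : Type*} [Field k] [AddCommGroup V] [Module k V]
    {x y a b : V}
    (ha : a ∈ Submodule.span k ({x, y} : Set V))
    (hb : b ∈ Submodule.span k ({x, y} : Set V))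
    (hab : LinearIndependent k ![a, b]) :
    Submodule.span k ({a, b} : Set V) = Submodule.span k ({x, y} : Set V) := by
  classical
  have hle : Submodule.span k ({a, b} : Set V) ≤ Submodule.span k ({x, y} : Set V) := by
    rw [Submodule.span_le]
    rintro z hz
    rcases hz with rfl | hz
    · exact ha
    · rcases hz with rfl; exact hb
  have hrange : (Set.range ![a, b] : Set V) = {a, b} := by
    ext z
    simp only [Set.mem_range, Fin.exists_fin_two, Matrix.cons_val_zero, Matrix.cons_val_one,
      Matrix.head_cons, Set.mem_insert_iff, Set.mem_singleton_iff]
    tauto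
  haveI : FiniteDimensional k (Submodule.span k ({x, y} : Set V)) :=
    FiniteDimensional.span_of_finite k (Set.toFinite _)
  have h2 : Module.finrank k (Submodule.span k ({a, b} : Set V)) = 2 := by
    have := finrank_span_eq_card (R := k) hab
    rw [hrange] at this
    simpa using this
  have hle2 : Module.finrank k (Submodule.span k ({x, y} : Set V)) ≤ 2 := by
    have h := finrank_span_le_card (R := k) ({x, y} : Set V)
    refine h.trans ?_
    have : ({x, y} : Set V).toFinset ⊆ ({x, y} : Finset V) := by
      intro z hz
      simp only [Set.toFinset_insert, Set.toFinset_singleton] at hz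
      exact hz
    calc ({x, y} : Set V).toFinset.card ≤ ({x, y} : Finset V).card :=
          Finset.card_le_card this
      _ ≤ 2 := Finset.card_insert_le _ _ |>.trans (by simp)
  exact Submodule.eq_of_le_of_finrank_le hle (by omega)

variable {k : Type*} [Field k] {σ : Type*}

/-- span of a set of monomials, as an ideal. -/
noncomputable def msp (k : Type*) [Field k] {σ : Type*} (A : Set (σ →₀ ℕ)) :
    Ideal (MvPolynomial σ k) :=
  Ideal.span ((fun s => monomial s (1 : k)) '' A)

theorem msp_mul (A B : Set (σ →₀ ℕ)) :
    msp k A * msp k B = msp k (A + B) := by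
  unfold msp
  rw [Ideal.span_mul_span']
  congr 1
  ext p
  simp only [Set.mem_mul, Set.mem_add, Set.mem_image]
  constructor
  · rintro ⟨_, ⟨a, ha, rfl⟩, _, ⟨b, hb, rfl⟩, rfl⟩
    exact ⟨a + b, ⟨a, ha, b, hb, rfl⟩, by simp [monomial_mul]⟩
  · rintro ⟨_, ⟨a, ha, b, hb, rfl⟩, rfl⟩
    exact ⟨monomial a 1, ⟨a, ha, rfl⟩, monomial b 1, ⟨b, hb, rfl⟩, by simp [monomial_mul]⟩

/-- Iterated pointwise sum of a set of exponents. -/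
def setPow (P : Set (σ →₀ ℕ)) : ℕ → Set (σ →₀ ℕ)
  | 0 => {0}
  | n + 1 => setPow P n + P

theorem msp_pow (P : Set (σ →₀ ℕ)) (m : ℕ) :
    msp k P ^ m = msp k (setPow P m) := by
  induction m with
  | zero =>
    rw [pow_zero, Ideal.one_eq_top]
    unfold msp setPow
    rw [Set.image_singleton]
    have : (monomial (0 : σ →₀ ℕ) (1 : k)) = 1 := by simp
    rw [this, Ideal.span_singleton_one]
  | succ n ih =>
    rw [pow_succ, ih, msp_mul]
    rfl

theorem span_pair_X_pow (i j : σ) (m : ℕ) :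
    Ideal.span ({X i, X j} : Set (MvPolynomial σ k)) ^ m
      = msp k (setPow ({Finsupp.single i 1, Finsupp.single j 1} : Set (σ →₀ ℕ)) m) := by
  rw [← msp_pow]
  congr 1
  unfold msp
  rw [Set.image_pair]
  simp only [← X_pow_eq_monomial, pow_one]

theorem inf_three_msp (A1 A2 A3 : Set (σ →₀ ℕ)) :
    msp k A1 ⊓ msp k A2 ⊓ msp k A3
      = msp k {s | (∃ t ∈ A1, t ≤ s) ∧ (∃ t ∈ A2, t ≤ s) ∧ (∃ t ∈ A3, t ≤ s)} := by
  ext p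
  unfold msp
  simp only [Submodule.mem_inf, mem_ideal_span_monomial_image, Set.mem_setOf_eq]
  constructor
  · rintro ⟨⟨h1, h2⟩, h3⟩ xi hxi
    exact ⟨xi, ⟨h1 xi hxi, h2 xi hxi, h3 xi hxi⟩, le_refl _⟩
  · intro h
    refine ⟨⟨?_, ?_⟩, ?_⟩ <;> intro xi hxi <;>
      obtain ⟨si, ⟨⟨t1, ht1, hts1⟩, ⟨t2, ht2, hts2⟩, ⟨t3, ht3, hts3⟩⟩, hsix⟩ := h xi hxi
    · exact ⟨t1, ht1, hts1.trans hsix⟩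
    · exact ⟨t2, ht2, hts2.trans hsix⟩
    · exact ⟨t3, ht3, hts3.trans hsix⟩

/-- In a Noetherian ring, the span of any set equals the span of some finite subset. -/
theorem aux_exists_finset_span_eq {A : Type*} [CommRing A] [IsNoetherianRing A] (s : Set A) :
    ∃ T : Finset A, ↑T ⊆ s ∧ Ideal.span (T : Set A) = Ideal.span s := by
  classical
  have hfg : (Ideal.span s).FG := IsNoetherian.noetherian _
  obtain ⟨G, hG⟩ := hfg
  choose T hTs hTm using fun g : {x // x ∈ G} =>
    Submodule.mem_span_finite_of_mem_span (R := A)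
      (show (g : A) ∈ Submodule.span A s by
        rw [Ideal.submodule_span_eq, ← hG]
        exact Ideal.subset_span (by simpa using g.2))
  refine ⟨G.attach.biUnion T, ?_, ?_⟩
  · intro x hx
    simp only [Finset.coe_biUnion, Set.mem_iUnion] at hx
    obtain ⟨g, _, hg⟩ := hx
    exact hTs g hg
  · apply le_antisymm
    · rw [Ideal.span_le]
      intro x hx
      simp only [Finset.coe_biUnion, Set.mem_iUnion] at hx
      obtain ⟨g, _, hg⟩ := hx
      exact Ideal.subset_span (hTs g hg)
    · rw [← hG, Ideal.span_le]
      intro g hg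
      have : g ∈ Submodule.span A ((T ⟨g, hg⟩ : Finset A) : Set A) := hTm ⟨g, hg⟩
      have hsub : ((T ⟨g, hg⟩ : Finset A) : Set A) ⊆ (G.attach.biUnion T : Finset A) := by
        intro x hx
        simp only [Finset.coe_biUnion, Set.mem_iUnion]
        exact ⟨⟨g, hg⟩, Finset.mem_attach _ _, hx⟩
      have := Submodule.span_mono hsub this
      rwa [Ideal.submodule_span_eq] at this
  
theorem aux_map_inf {A B F : Type*} [CommRing A] [CommRing B] [FunLike F A B]
    [RingHomClass F A B] (f : F)
    (hinj : Function.Injective f) (hsurj : Function.Surjective f) (I J : Ideal A) :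
    Ideal.map f (I ⊓ J) = Ideal.map f I ⊓ Ideal.map f J := by
  apply le_antisymm
  · exact le_inf (Ideal.map_mono inf_le_left) (Ideal.map_mono inf_le_right)
  · intro x hx
    obtain ⟨hx1, hx2⟩ := hx
    obtain ⟨a, ha, rfl⟩ := (Ideal.mem_map_iff_of_surjective f hsurj).mp hx1
    obtain ⟨b, hb, hba⟩ := (Ideal.mem_map_iff_of_surjective f hsurj).mp hx2
    have : b = a := hinj hba
    subst this
    exact Ideal.mem_map_of_mem f ⟨ha, hb⟩

end Aux

/-- Proposition 2.6: `I_W` is minimally generated by a set of forms, each of which is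
a product of powers of the four lines. -/
theorem fat_three_points_minimal_generators_products
    {k : Type*} [Field k]
    (h1 h2 v1 v2 : MvPolynomial (Fin 4) k)
    (hh1 : h1 ∈ Submodule.span k ({X 0, X 1} : Set (MvPolynomial (Fin 4) k)))
    (hh2 : h2 ∈ Submodule.span k ({X 0, X 1} : Set (MvPolynomial (Fin 4) k)))
    (hhind : LinearIndependent k ![h1, h2])
    (hv1 : v1 ∈ Submodule.span k ({X 2, X 3} : Set (MvPolynomial (Fin 4) k)))
    (hv2 : v2 ∈ Submodule.span k ({X 2, X 3} : Set (MvPolynomial (Fin 4) k)))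
    (hvind : LinearIndependent k ![v1, v2])
    (m11 m12 m21 : ℕ)
    (IW : Ideal (MvPolynomial (Fin 4) k))
    (hIW : IW = Ideal.span {h1, v1} ^ m11 ⊓ Ideal.span {h1, v2} ^ m12 ⊓
        Ideal.span {h2, v1} ^ m21) :
    ∃ S : Finset (MvPolynomial (Fin 4) k),
      (∀ f ∈ S, ∃ a1 a2 b1 b2 : ℕ, f = h1 ^ a1 * h2 ^ a2 * v1 ^ b1 * v2 ^ b2) ∧
      Ideal.span (S : Set (MvPolynomial (Fin 4) k)) = IW ∧
      ∀ T : Finset (MvPolynomial (Fin 4) k), T ⊂ S →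
        Ideal.span (T : Set (MvPolynomial (Fin 4) k)) ≠ IW := by
  classical
  -- It suffices to find SOME finite generating set of product forms.
  suffices hexists : ∃ S0 : Finset (MvPolynomial (Fin 4) k),
      (∀ f ∈ S0, ∃ a1 a2 b1 b2 : ℕ, f = h1 ^ a1 * h2 ^ a2 * v1 ^ b1 * v2 ^ b2) ∧
      Ideal.span (S0 : Set (MvPolynomial (Fin 4) k)) = IW by
    obtain ⟨S0, hS0prod, hS0span⟩ := hexists
    set cands := S0.powerset.filter
      (fun T : Finset (MvPolynomial (Fin 4) k) =>
        Ideal.span (T : Set (MvPolynomial (Fin 4) k)) = IW) with hcands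
    have hS0mem : S0 ∈ cands :=
      Finset.mem_filter.mpr ⟨Finset.mem_powerset_self _, hS0span⟩
    obtain ⟨S, hScand, hSmin⟩ := Finset.exists_min_image cands Finset.card ⟨S0, hS0mem⟩
    have hSsub : S ⊆ S0 := Finset.mem_powerset.mp (Finset.mem_filter.mp hScand).1
    have hSspan : Ideal.span (S : Set (MvPolynomial (Fin 4) k)) = IW :=
      (Finset.mem_filter.mp hScand).2
    refine ⟨S, fun f hf => hS0prod f (hSsub hf), hSspan, ?_⟩
    intro T hT hTspan
    have hTmem : T ∈ cands :=
      Finset.mem_filter.mpr ⟨Finset.mem_powerset.mpr (hT.subset.trans hSsub), hTspan⟩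
    have := hSmin T hTmem
    have hlt := Finset.card_lt_card hT
    omega
  -- Construct the substitution endomorphism.
  set w : Fin 4 → MvPolynomial (Fin 4) k := ![h1, h2, v1, v2] with hw
  set φ : MvPolynomial (Fin 4) k →ₐ[k] MvPolynomial (Fin 4) k := aeval w with hφ
  have hφ0 : φ (X 0) = h1 := by simp [hφ, hw]
  have hφ1 : φ (X 1) = h2 := by simp [hφ, hw]
  have hφ2 : φ (X 2) = v1 := by simp [hφ, hw]
  have hφ3 : φ (X 3) = v2 := by simp [hφ, hw]
  -- Span equalities.
  have hspanH : Submodule.span k ({h1, h2} : Set (MvPolynomial (Fin 4) k))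
      = Submodule.span k ({X 0, X 1} : Set (MvPolynomial (Fin 4) k)) :=
    aux_span_pair_eq hh1 hh2 hhind
  have hspanV : Submodule.span k ({v1, v2} : Set (MvPolynomial (Fin 4) k))
      = Submodule.span k ({X 2, X 3} : Set (MvPolynomial (Fin 4) k)) :=
    aux_span_pair_eq hv1 hv2 hvind
  -- Surjectivity of φ.
  have hXrange : ∀ i : Fin 4, X i ∈ φ.range := by
    have hH : Submodule.span k ({h1, h2} : Set (MvPolynomial (Fin 4) k))
        ≤ Subalgebra.toSubmodule φ.range := by
      rw [Submodule.span_le]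
      rintro z (rfl | rfl)
      · exact ⟨X 0, hφ0⟩
      · exact ⟨X 1, hφ1⟩
    have hV : Submodule.span k ({v1, v2} : Set (MvPolynomial (Fin 4) k))
        ≤ Subalgebra.toSubmodule φ.range := by
      rw [Submodule.span_le]
      rintro z (rfl | rfl)
      · exact ⟨X 2, hφ2⟩
      · exact ⟨X 3, hφ3⟩
    intro i
    fin_cases i
    · exact hH (hspanH ▸ Submodule.subset_span (by simp))
    · exact hH (hspanH ▸ Submodule.subset_span (by simp))
    · exact hV (hspanV ▸ Submodule.subset_span (by simp))
    · exact hV (hspanV ▸ Submodule.subset_span (by simp))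
  have hsurj : Function.Surjective φ := by
    rw [← AlgHom.range_eq_top]
    rw [eq_top_iff, ← MvPolynomial.adjoin_range_X (R := k) (σ := Fin 4)]
    exact Algebra.adjoin_le (Set.range_subset_iff.mpr hXrange)
  have hinj : Function.Injective φ := by
    have := aux_inj_of_surj (φ : MvPolynomial (Fin 4) k →+* MvPolynomial (Fin 4) k) hsurj
    exact this
  -- The monomial side.
  set J1 : Ideal (MvPolynomial (Fin 4) k) := Ideal.span {X 0, X 2} ^ m11 with hJ1
  set J2 : Ideal (MvPolynomial (Fin 4) k) := Ideal.span {X 0, X 3} ^ m12 with hJ2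
  set J3 : Ideal (MvPolynomial (Fin 4) k) := Ideal.span {X 1, X 2} ^ m21 with hJ3
  set J : Ideal (MvPolynomial (Fin 4) k) := J1 ⊓ J2 ⊓ J3 with hJ
  -- IW is the image of J.
  have hmapJ1 : Ideal.map φ J1 = Ideal.span {h1, v1} ^ m11 := by
    rw [hJ1, Ideal.map_pow, Ideal.map_span, Set.image_pair, hφ0, hφ2]
  have hmapJ2 : Ideal.map φ J2 = Ideal.span {h1, v2} ^ m12 := by
    rw [hJ2, Ideal.map_pow, Ideal.map_span, Set.image_pair, hφ0, hφ3]
  have hmapJ3 : Ideal.map φ J3 = Ideal.span {h2, v1} ^ m21 := by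
    rw [hJ3, Ideal.map_pow, Ideal.map_span, Set.image_pair, hφ1, hφ2]
  have hmapJ : Ideal.map φ J = IW := by
    rw [hJ, hIW]
    rw [aux_map_inf φ hinj hsurj, aux_map_inf φ hinj hsurj]
    rw [hmapJ1, hmapJ2, hmapJ3]
  -- J is a span of monomials.
  set A1 := setPow ({Finsupp.single (0 : Fin 4) 1, Finsupp.single 2 1} :
    Set (Fin 4 →₀ ℕ)) m11 with hA1
  set A2 := setPow ({Finsupp.single (0 : Fin 4) 1, Finsupp.single 3 1} :
    Set (Fin 4 →₀ ℕ)) m12 with hA2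
  set A3 := setPow ({Finsupp.single (1 : Fin 4) 1, Finsupp.single 2 1} :
    Set (Fin 4 →₀ ℕ)) m21 with hA3
  set C : Set (Fin 4 →₀ ℕ) :=
    {s | (∃ t ∈ A1, t ≤ s) ∧ (∃ t ∈ A2, t ≤ s) ∧ (∃ t ∈ A3, t ≤ s)} with hC
  have hJmsp : J = msp k C := by
    rw [hJ, hJ1, hJ2, hJ3, span_pair_X_pow, span_pair_X_pow, span_pair_X_pow,
      inf_three_msp]
  -- Extract a finite generating set of monomials for J.
  obtain ⟨T, hTsub, hTspan⟩ :=
    aux_exists_finset_span_eq ((fun s => monomial s (1 : k)) '' C)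
  have hTspan' : Ideal.span (T : Set (MvPolynomial (Fin 4) k)) = J := by
    rw [hTspan, hJmsp]; rfl
  -- The image of T under φ works.
  refine ⟨T.image φ, ?_, ?_⟩
  · intro f hf
    obtain ⟨t, htT, rfl⟩ := Finset.mem_image.mp hf
    obtain ⟨s, _, hs⟩ := hTsub htT
    refine ⟨s 0, s 1, s 2, s 3, ?_⟩
    rw [← hs, hφ]
    rw [aeval_monomial]
    rw [Finsupp.prod_fintype _ _ (fun i => pow_zero (w i))]
    rw [Fin.prod_univ_four]
    simp [hw]
  · rw [Finset.coe_image, ← Ideal.map_span, hTspan', hmapJ]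
end

section
/- For all nonnegative integers a1, a2, b1, b2, the product h1^{a1} h2^{a2} v1^{b1} v2^{b2} belongs to I_W if and only if a1 + b1 ≥ m11, a1 + b2 ≥ m12 and a2 + b1 ≥ m21. -/
open MvPolynomial

/-! Sufficiency is immediate, since `h ^ a * v ^ b ∈ (h, v) ^ (a + b)`. For necessity, the two
horizontal lines and the two vertical lines are each a linear change of coordinates, so there is a
`k`-algebra map to `k[t]` sending `h` and `v` to `t` and the other two lines to `1`. It maps
`(h, v) ^ m` into `(t ^ m)` and the product to `t ^ (a + b)`, whence `m ≤ a + b`. -/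

theorem exists_smul_add_smul_eq_of_det_ne_zero {k M : Type*} [Field k] [AddCommGroup M]
    [Module k M] {c₀ c₁ d₀ d₁ : k} (hdet : c₀ * d₁ - c₁ * d₀ ≠ 0) (u w : M) :
    ∃ a b : M, c₀ • a + c₁ • b = u ∧ d₀ • a + d₁ • b = w := by
  refine ⟨(c₀ * d₁ - c₁ * d₀)⁻¹ • (d₁ • u - c₁ • w),
    (c₀ * d₁ - c₁ * d₀)⁻¹ • (c₀ • w - d₀ • u), ?_, ?_⟩
  · linear_combination (norm := module) inv_mul_cancel₀ hdet • u
  · linear_combination (norm := module) inv_mul_cancel₀ hdet • w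

theorem det_ne_zero_of_linearIndependent {k M : Type*} [CommRing k] [Nontrivial k]
    [AddCommGroup M] [Module k M] {x y p q : M} {c₀ c₁ d₀ d₁ : k}
    (hp : c₀ • x + c₁ • y = p) (hq : d₀ • x + d₁ • y = q)
    (hpq : LinearIndependent k ![p, q]) : c₀ * d₁ - c₁ * d₀ ≠ 0 := by
  intro hdet
  have hpair := LinearIndependent.pair_iff.mp hpq
  obtain ⟨-, hc₁⟩ := hpair d₁ (-c₁) (by
    rw [← hp, ← hq]
    linear_combination (norm := module) hdet • x)
  obtain ⟨-, hc₀⟩ := hpair (-d₀) c₀ (by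
    rw [← hp, ← hq]
    linear_combination (norm := module) hdet • y)
  refine hpq.ne_zero 0 ?_
  simp [← hp, hc₀, neg_eq_zero.mp hc₁]

theorem exists_aeval_eq_of_linearIndependent {σ k A : Type*} [Field k] [CommRing A]
    [Algebra k A] {i j : σ} {p q : MvPolynomial σ k}
    (hp : p ∈ Submodule.span k {X i, X j}) (hq : q ∈ Submodule.span k {X i, X j})
    (hpq : LinearIndependent k ![p, q]) (u w : A) :
    ∃ a b : A, ∀ α : σ → A, α i = a → α j = b → aeval α p = u ∧ aeval α q = w := by
  obtain ⟨c₀, c₁, rfl⟩ := Submodule.mem_span_pair.mp hp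
  obtain ⟨d₀, d₁, rfl⟩ := Submodule.mem_span_pair.mp hq
  obtain ⟨a, b, hu, hw⟩ :=
    exists_smul_add_smul_eq_of_det_ne_zero (det_ne_zero_of_linearIndependent rfl rfl hpq) u w
  refine ⟨a, b, fun α hα hβ => ?_⟩
  simp [hα, hβ, hu, hw]

theorem pow_dvd_map_of_mem_span_pair_pow {R S : Type*} [CommSemiring R] [CommSemiring S]
    (φ : R →+* S) {f g p : R} {t : S} {m : ℕ} (hf : φ f = t) (hg : φ g = t)
    (hp : p ∈ Ideal.span {f, g} ^ m) : t ^ m ∣ φ p := by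
  have hmap := Ideal.mem_map_of_mem φ hp
  rwa [Ideal.map_pow, Ideal.map_span, Set.image_pair, hf, hg, Set.pair_eq_singleton,
    Ideal.span_singleton_pow, Ideal.mem_span_singleton] at hmap

theorem pow_mul_pow_mem_span_pair_pow {R : Type*} [CommSemiring R] (f g : R) {a b m : ℕ}
    (h : m ≤ a + b) : f ^ a * g ^ b ∈ Ideal.span {f, g} ^ m := by
  refine Ideal.pow_le_pow_right h ?_
  rw [pow_add]
  exact Ideal.mul_mem_mul (Ideal.pow_mem_pow (Ideal.subset_span (by simp)) a)
    (Ideal.pow_mem_pow (Ideal.subset_span (by simp)) b)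

theorem mem_span_pair_pow_iff_of_lines {k : Type*} [Field k]
    {h h' v v' : MvPolynomial (Fin 4) k}
    (hh : h ∈ Submodule.span k {X 0, X 1}) (hh' : h' ∈ Submodule.span k {X 0, X 1})
    (hhind : LinearIndependent k ![h, h'])
    (hv : v ∈ Submodule.span k {X 2, X 3}) (hv' : v' ∈ Submodule.span k {X 2, X 3})
    (hvind : LinearIndependent k ![v, v']) (a a' b b' m : ℕ) :
    h ^ a * h' ^ a' * v ^ b * v' ^ b' ∈ Ideal.span {h, v} ^ m ↔ m ≤ a + b := by
  refine ⟨fun hmem => ?_, fun hm => ?_⟩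
  · obtain ⟨x₀, x₁, hx⟩ := exists_aeval_eq_of_linearIndependent hh hh' hhind
      (Polynomial.X : Polynomial k) 1
    obtain ⟨x₂, x₃, hy⟩ := exists_aeval_eq_of_linearIndependent hv hv' hvind
      (Polynomial.X : Polynomial k) 1
    obtain ⟨hhX, hh'1⟩ := hx ![x₀, x₁, x₂, x₃] rfl rfl
    obtain ⟨hvX, hv'1⟩ := hy ![x₀, x₁, x₂, x₃] rfl rfl
    have hdvd :=
      pow_dvd_map_of_mem_span_pair_pow (aeval ![x₀, x₁, x₂, x₃]).toRingHom hhX hvX hmem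
    simp only [AlgHom.toRingHom_eq_coe, RingHom.coe_coe, map_mul, map_pow, hhX, hh'1, hvX, hv'1,
      one_pow, mul_one, ← pow_add] at hdvd
    exact (pow_dvd_pow_iff Polynomial.X_ne_zero Polynomial.not_isUnit_X).mp hdvd
  · rw [show h ^ a * h' ^ a' * v ^ b * v' ^ b' = h' ^ a' * v' ^ b' * (h ^ a * v ^ b) by ring]
    exact Ideal.mul_mem_left _ _ (pow_mul_pow_mem_span_pair_pow h v hm)

/-- Membership criterion for products of powers of lines in `I_W`. -/
theorem product_of_lines_mem_iff
    {k : Type*} [Field k]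
    (h1 h2 v1 v2 : MvPolynomial (Fin 4) k)
    (hh1 : h1 ∈ Submodule.span k ({X 0, X 1} : Set (MvPolynomial (Fin 4) k)))
    (hh2 : h2 ∈ Submodule.span k ({X 0, X 1} : Set (MvPolynomial (Fin 4) k)))
    (hhind : LinearIndependent k ![h1, h2])
    (hv1 : v1 ∈ Submodule.span k ({X 2, X 3} : Set (MvPolynomial (Fin 4) k)))
    (hv2 : v2 ∈ Submodule.span k ({X 2, X 3} : Set (MvPolynomial (Fin 4) k)))
    (hvind : LinearIndependent k ![v1, v2])
    (m11 m12 m21 : ℕ)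
    (IW : Ideal (MvPolynomial (Fin 4) k))
    (hIW : IW = Ideal.span {h1, v1} ^ m11 ⊓ Ideal.span {h1, v2} ^ m12 ⊓
        Ideal.span {h2, v1} ^ m21) :
    ∀ a1 a2 b1 b2 : ℕ,
      h1 ^ a1 * h2 ^ a2 * v1 ^ b1 * v2 ^ b2 ∈ IW ↔
        m11 ≤ a1 + b1 ∧ m12 ≤ a1 + b2 ∧ m21 ≤ a2 + b1 := by
  intro a1 a2 b1 b2
  have h11 := mem_span_pair_pow_iff_of_lines hh1 hh2 hhind hv1 hv2 hvind a1 a2 b1 b2 m11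
  have h12 : h1 ^ a1 * h2 ^ a2 * v1 ^ b1 * v2 ^ b2 ∈ Ideal.span {h1, v2} ^ m12 ↔
      m12 ≤ a1 + b2 := by
    rw [mul_right_comm]
    exact mem_span_pair_pow_iff_of_lines hh1 hh2 hhind hv2 hv1
      (LinearIndependent.pair_symm_iff.mp hvind) a1 a2 b2 b1 m12
  have h21 : h1 ^ a1 * h2 ^ a2 * v1 ^ b1 * v2 ^ b2 ∈ Ideal.span {h2, v1} ^ m21 ↔
      m21 ≤ a2 + b1 := by
    rw [mul_comm (h1 ^ a1)]
    exact mem_span_pair_pow_iff_of_lines hh2 hh1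
      (LinearIndependent.pair_symm_iff.mp hhind) hv1 hv2 hvind a2 a1 b1 b2 m21
  rw [hIW, Ideal.mem_inf, Ideal.mem_inf, h11, h12, h21, and_assoc]
end

section
/- Set I = v1·I_{W1} and J = h1^{m11} h2^{m21}·(h1,v2)^{(m12−m11)_+} (ideals of R, viewed as R-submodules of R). Then the sequence 0 → I ∩ J → I ⊕ J → I + J → 0, where the first map sends x to (x, −x) and the second sends (x, y) to x + y, is a short exact sequence of R-modules; moreover I + J = I_W and I ∩ J = v1 h1^{m11} h2^{m21}·(h1,v2)^{(m12−m11)_+}. -/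
/-!
The linear change of coordinates `x0, x1, x2, x3 ↦ h1, h2, v1, v2` is a ring automorphism of `R`
(its matrix is block diagonal with two invertible `2 × 2` blocks), so it suffices to treat
`h1 = x0, h2 = x1, v1 = x2, v2 = x3`. There every ideal involved is monomial, and membership is
decided term by term on exponent vectors: a term of `I_W` not divisible by `x2` lies in `J`, and
one divisible by `x2` lies in `x2 · I_{W1}`. Since the generators of the monomial ideal `J` do not
involve `x2`, `(x2) ∩ J = x2 · J`, which gives `I ∩ J`. The reverse inclusions hold in every
commutative ring, and exactness is a general fact about two submodules.
-/

open MvPolynomial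

namespace Submodule

variable {R M : Type*} [Ring R] [AddCommGroup M] [Module R M] (P Q : Submodule R M)

theorem injective_inclusion_prod_neg_inclusion :
    Function.Injective ((inclusion (inf_le_left : P ⊓ Q ≤ P)).prod
      (-(inclusion (inf_le_right : P ⊓ Q ≤ Q)))) := fun _ _ h =>
  inclusion_injective _ (congrArg Prod.fst h)

theorem range_inclusion_prod_neg_inclusion :
    LinearMap.range ((inclusion (inf_le_left : P ⊓ Q ≤ P)).prod
      (-(inclusion (inf_le_right : P ⊓ Q ≤ Q)))) =
      LinearMap.ker (P.subtype.coprod Q.subtype) := by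
  ext ⟨x, y⟩
  simp only [LinearMap.mem_range, LinearMap.mem_ker, LinearMap.prod_apply, Function.prod,
    LinearMap.coprod_apply, subtype_apply, LinearMap.neg_apply, Prod.mk.injEq]
  constructor
  · rintro ⟨z, rfl, rfl⟩
    simp
  · intro hxy
    have hyx : (y : M) = -x := eq_neg_of_add_eq_zero_right hxy
    refine ⟨⟨x, x.2, ?_⟩, rfl, Subtype.ext ?_⟩
    · simpa [hyx] using neg_mem y.2
    · simp [hyx]

end Submodule

namespace Ideal

variable {A B : Type*} [CommSemiring A] [CommSemiring B]

theorem map_ringEquiv_inf (e : A ≃+* B) (I J : Ideal A) :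
    (I ⊓ J).map e = I.map e ⊓ J.map e := by
  simp only [← comap_symm, comap_inf]

theorem span_singleton_mul_pow_pred_le {I : Ideal A} {x : A} (hx : x ∈ I) (m : ℕ) :
    Ideal.span {x} * I ^ (m - 1) ≤ I ^ m :=
  calc Ideal.span {x} * I ^ (m - 1) ≤ I ^ 1 * I ^ (m - 1) :=
        Ideal.mul_mono_left (by rwa [pow_one, Ideal.span_singleton_le_iff_mem])
    _ = I ^ (1 + (m - 1)) := (pow_add ..).symm
    _ ≤ I ^ m := Ideal.pow_le_pow_right (by omega)

end Ideal

namespace MvPolynomial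

variable {σ R : Type*} [CommSemiring R]

theorem span_X_image_pow_eq_span_monomial_image (s : Finset σ) (n : ℕ) :
    Ideal.span (X '' (s : Set σ) : Set (MvPolynomial σ R)) ^ n =
      Ideal.span ((monomial · (1 : R)) '' {d | n ≤ ∑ i ∈ s, d i}) := by
  classical
  induction n with
  | zero =>
    rw [pow_zero, Ideal.one_eq_top, eq_comm, Ideal.eq_top_iff_one]
    exact Ideal.subset_span ⟨0, Nat.zero_le _, by simp⟩
  | succ n ih =>
    apply le_antisymm
    · rw [pow_succ, ih, Ideal.span_mul_span', Ideal.span_le]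
      rintro _ ⟨_, ⟨d, hd, rfl⟩, _, ⟨i, hi, rfl⟩, rfl⟩
      refine Ideal.subset_span ⟨d + Finsupp.single i 1, ?_, by simp [monomial_add_single]⟩
      simp only [Set.mem_ofPred_eq, Finsupp.add_apply, Finset.sum_add_distrib,
        Finsupp.single_apply, Finset.sum_ite_eq] at hd ⊢
      rw [if_pos (Finset.mem_coe.mp hi)]
      omega
    · rw [Ideal.span_le]
      rintro _ ⟨d, hd, rfl⟩
      obtain ⟨i, hi, hdi⟩ : ∃ i ∈ s, d i ≠ 0 := by
        by_contra! h
        simp [Finset.sum_eq_zero h] at hd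
      have hle : Finsupp.single i 1 ≤ d := Finsupp.single_le_iff.mpr (Nat.pos_of_ne_zero hdi)
      have hsum := congrArg (fun f : σ →₀ ℕ => ∑ l ∈ s, f l) (tsub_add_cancel_of_le hle)
      simp only [Finsupp.add_apply, Finset.sum_add_distrib, Finsupp.single_apply,
        Finset.sum_ite_eq, hi, if_true] at hsum
      change monomial d 1 ∈ _
      rw [← tsub_add_cancel_of_le hle, monomial_add_single, pow_one, pow_succ, ih]
      refine Ideal.mul_mem_mul (Ideal.subset_span ⟨_, ?_, rfl⟩)
        (Ideal.subset_span ⟨i, hi, rfl⟩)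
      simp only [Set.mem_ofPred_eq] at hd ⊢
      omega

theorem mem_span_X_image_pow_iff {s : Finset σ} {n : ℕ} {p : MvPolynomial σ R} :
    p ∈ Ideal.span (X '' (s : Set σ)) ^ n ↔ ∀ d ∈ p.support, n ≤ ∑ i ∈ s, d i := by
  rw [span_X_image_pow_eq_span_monomial_image, mem_ideal_span_monomial_image]
  exact forall₂_congr fun d _ =>
    ⟨fun ⟨t, ht, htd⟩ => ht.trans (Finset.sum_le_sum fun i _ => htd i),
      fun h => ⟨d, h, le_rfl⟩⟩

theorem mem_span_X_pair_pow_iff {i j : σ} (hij : i ≠ j) {n : ℕ} {p : MvPolynomial σ R} :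
    p ∈ Ideal.span {X i, X j} ^ n ↔ ∀ d ∈ p.support, n ≤ d i + d j := by
  classical
  have h : ({X i, X j} : Set (MvPolynomial σ R)) = X '' (({i, j} : Finset σ) : Set σ) := by
    simp [Set.image_pair]
  rw [h, mem_span_X_image_pow_iff]
  simp [Finset.sum_pair hij]

theorem mem_span_monomial_mul_span_X_image_pow_iff {u : σ →₀ ℕ} {s : Finset σ} {n : ℕ}
    {p : MvPolynomial σ R} :
    p ∈ Ideal.span {monomial u 1} * Ideal.span (X '' (s : Set σ)) ^ n ↔
      ∀ d ∈ p.support, u ≤ d ∧ n ≤ ∑ i ∈ s, (d - u) i := by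
  rw [span_X_image_pow_eq_span_monomial_image, Ideal.span_mul_span', Set.singleton_mul,
    Set.image_image]
  simp only [monomial_mul, one_mul]
  rw [← Set.image_image (monomial · (1 : R)) (u + ·), mem_ideal_span_monomial_image]
  refine forall₂_congr fun d _ => ⟨?_, ?_⟩
  · rintro ⟨_, ⟨t, ht, rfl⟩, hle⟩
    refine ⟨le_self_add.trans hle, ht.trans (Finset.sum_le_sum fun i _ => ?_)⟩
    have := hle i
    simp only [Finsupp.add_apply] at this
    simp only [Finsupp.tsub_apply]
    omega
  · rintro ⟨hu, hn⟩
    exact ⟨_, ⟨d - u, hn, rfl⟩, (add_tsub_cancel_of_le hu).le⟩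

theorem X_pow_mul_X_pow (i j : σ) (a b : ℕ) :
    (X i ^ a * X j ^ b : MvPolynomial σ R) =
      monomial (Finsupp.single i a + Finsupp.single j b) 1 := by
  rw [X_pow_eq_monomial, X_pow_eq_monomial, monomial_mul, one_mul]

theorem span_X_inf_span_monomial_mul_le {i : σ} {s : Finset σ} (hi : i ∉ s) {u : σ →₀ ℕ}
    (hu : u i = 0) (n : ℕ) :
    Ideal.span {X i} ⊓ Ideal.span {monomial u (1 : R)} * Ideal.span (X '' (s : Set σ)) ^ n ≤
      Ideal.span {X i} * (Ideal.span {monomial u 1} * Ideal.span (X '' (s : Set σ)) ^ n) := by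
  classical
  intro p hp
  obtain ⟨hpX, hpJ⟩ := Ideal.mem_inf.mp hp
  rw [← Set.image_singleton, mem_ideal_span_X_image] at hpX
  rw [mem_span_monomial_mul_span_X_image_pow_iff] at hpJ
  rw [← mul_assoc, Ideal.span_singleton_mul_span_singleton, mul_comm (X i), ← pow_one (X i),
    ← monomial_add_single, mem_span_monomial_mul_span_X_image_pow_iff]
  intro d hd
  obtain ⟨hud, hn⟩ := hpJ d hd
  obtain ⟨j, hj, hdj⟩ := hpX d hd
  rw [Set.mem_singleton_iff.mp hj] at hdj
  refine ⟨fun l => ?_, hn.trans_eq (Finset.sum_congr rfl fun l hl => ?_)⟩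
  · have := hud l
    by_cases hl : l = i
    · subst hl
      simp only [Finsupp.add_apply, Finsupp.single_eq_same, hu]
      omega
    · simpa [Finsupp.single_apply, Ne.symm hl] using this
  · simp [Ne.symm (ne_of_mem_of_not_mem hl hi)]

end MvPolynomial

namespace MvPolynomial

variable {ι k : Type*} [Fintype ι] [CommSemiring k]

noncomputable def linearSubst (M : Matrix ι ι k) :
    MvPolynomial ι k →ₐ[k] MvPolynomial ι k :=
  aeval fun i => ∑ j, M i j • X j

theorem linearSubst_X (M : Matrix ι ι k) (i : ι) : linearSubst M (X i) = ∑ j, M i j • X j :=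
  aeval_X _ _

theorem linearSubst_comp (M N : Matrix ι ι k) :
    (linearSubst M).comp (linearSubst N) = linearSubst (N * M) := by
  refine algHom_ext fun i => ?_
  simp only [AlgHom.comp_apply, linearSubst_X, map_sum, map_smul, Matrix.mul_apply,
    Finset.smul_sum, smul_smul, Finset.sum_smul]
  exact Finset.sum_comm

theorem linearSubst_one [DecidableEq ι] : linearSubst (1 : Matrix ι ι k) = AlgHom.id k _ := by
  refine algHom_ext fun i => ?_
  simp [linearSubst_X, Matrix.one_apply]

noncomputable def linearSubstEquiv [DecidableEq ι] (M N : Matrix ι ι k) (hMN : M * N = 1)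
    (hNM : N * M = 1) :
    MvPolynomial ι k ≃ₐ[k] MvPolynomial ι k :=
  AlgEquiv.ofAlgHom (linearSubst M) (linearSubst N)
    (by rw [linearSubst_comp, hNM, linearSubst_one])
    (by rw [linearSubst_comp, hMN, linearSubst_one])

end MvPolynomial

theorem det_ne_zero_of_linearIndependent_pair {k M : Type*} [Field k] [AddCommGroup M]
    [Module k M] {x y u v : M} {a b c d : k} (hu : a • x + b • y = u)
    (hv : c • x + d • y = v)
    (hind : LinearIndependent k ![u, v]) : a * d - b * c ≠ 0 := by
  intro hdet
  have hd_b : d • u + (-b) • v = 0 := by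
    rw [← hu, ← hv, ← zero_smul k x, ← hdet]; module
  have hc_a : (-c) • u + a • v = 0 := by
    rw [← hu, ← hv, ← zero_smul k y, ← hdet]; module
  obtain ⟨-, hb⟩ := LinearIndependent.pair_iff.mp hind d (-b) hd_b
  obtain ⟨-, ha⟩ := LinearIndependent.pair_iff.mp hind (-c) a hc_a
  exact hind.ne_zero 0 (by simp [← hu, ha, neg_eq_zero.mp hb])

theorem exists_ringEquiv_X_eq {k : Type*} [Field k] {h1 h2 v1 v2 : MvPolynomial (Fin 4) k}
    (hh1 : h1 ∈ Submodule.span k {X 0, X 1}) (hh2 : h2 ∈ Submodule.span k {X 0, X 1})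
    (hhind : LinearIndependent k ![h1, h2])
    (hv1 : v1 ∈ Submodule.span k {X 2, X 3}) (hv2 : v2 ∈ Submodule.span k {X 2, X 3})
    (hvind : LinearIndependent k ![v1, v2]) :
    ∃ e : MvPolynomial (Fin 4) k ≃+* MvPolynomial (Fin 4) k,
      e (X 0) = h1 ∧ e (X 1) = h2 ∧ e (X 2) = v1 ∧ e (X 3) = v2 := by
  obtain ⟨a, b, rfl⟩ := Submodule.mem_span_pair.mp hh1
  obtain ⟨c, d, rfl⟩ := Submodule.mem_span_pair.mp hh2
  obtain ⟨a', b', rfl⟩ := Submodule.mem_span_pair.mp hv1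
  obtain ⟨c', d', rfl⟩ := Submodule.mem_span_pair.mp hv2
  let M : Matrix (Fin 4) (Fin 4) k := !![a, b, 0, 0; c, d, 0, 0; 0, 0, a', b'; 0, 0, c', d']
  have hdet : M.det = (a * d - b * c) * (a' * d' - b' * c') := by
    simp [M, Matrix.det_succ_row_zero, Fin.sum_univ_succ, Fin.succAbove]; ring
  have hM : IsUnit M.det := by
    rw [hdet]
    exact (mul_ne_zero (det_ne_zero_of_linearIndependent_pair rfl rfl hhind)
      (det_ne_zero_of_linearIndependent_pair rfl rfl hvind)).isUnit
  refine ⟨(linearSubstEquiv M M⁻¹ (M.mul_nonsing_inv hM) (M.nonsing_inv_mul hM)).toRingEquiv,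
    ?_, ?_, ?_, ?_⟩ <;>
  simp [linearSubstEquiv, linearSubst_X, Fin.sum_univ_four, M]

section FatPoints

variable {A : Type*} [CommSemiring A]

/-- The ideal `I_W` of the fat points `m11 P11 + m12 P12 + m21 P21`, where `Pab = ha × vb`. -/
def fatIdeal (h1 h2 v1 v2 : A) (m11 m12 m21 : ℕ) : Ideal A :=
  Ideal.span {h1, v1} ^ m11 ⊓ Ideal.span {h1, v2} ^ m12 ⊓ Ideal.span {h2, v1} ^ m21

theorem fatIdeal_anti {h1 h2 v1 v2 : A} {m11 m12 m21 n11 n12 n21 : ℕ} (h11 : m11 ≤ n11)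
    (h12 : m12 ≤ n12) (h21 : m21 ≤ n21) :
    fatIdeal h1 h2 v1 v2 n11 n12 n21 ≤ fatIdeal h1 h2 v1 v2 m11 m12 m21 :=
  inf_le_inf (inf_le_inf (Ideal.pow_le_pow_right h11) (Ideal.pow_le_pow_right h12))
    (Ideal.pow_le_pow_right h21)

theorem map_fatIdeal {B : Type*} [CommSemiring B] (e : A ≃+* B) (h1 h2 v1 v2 : A)
    (m11 m12 m21 : ℕ) :
    (fatIdeal h1 h2 v1 v2 m11 m12 m21).map e =
      fatIdeal (e h1) (e h2) (e v1) (e v2) m11 m12 m21 := by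
  simp only [fatIdeal, Ideal.map_ringEquiv_inf, Ideal.map_pow, Ideal.map_span, Set.image_pair]

theorem span_singleton_mul_fatIdeal_le (h1 h2 v1 v2 : A) (m11 m12 m21 : ℕ) :
    Ideal.span {v1} * fatIdeal h1 h2 v1 v2 (m11 - 1) m12 (m21 - 1) ≤
      fatIdeal h1 h2 v1 v2 m11 m12 m21 := by
  refine le_inf (le_inf ?_ ?_) ?_
  · exact (Ideal.mul_mono_right (inf_le_left.trans inf_le_left)).trans
      (Ideal.span_singleton_mul_pow_pred_le (Ideal.subset_span (by simp)) _)
  · exact (Ideal.mul_mono_right (inf_le_left.trans inf_le_right)).trans Ideal.mul_le_right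
  · exact (Ideal.mul_mono_right inf_le_right).trans
      (Ideal.span_singleton_mul_pow_pred_le (Ideal.subset_span (by simp)) _)

theorem span_mul_span_pair_pow_le_fatIdeal (h1 h2 v1 v2 : A) (m11 m12 m21 : ℕ) :
    Ideal.span {h1 ^ m11 * h2 ^ m21} * Ideal.span {h1, v2} ^ (m12 - m11) ≤
      fatIdeal h1 h2 v1 v2 m11 m12 m21 := by
  intro p hp
  obtain ⟨z, hz, rfl⟩ := Ideal.mem_span_singleton_mul.mp hp
  have hmem {x y : A} : x ∈ Ideal.span {x, y} := Ideal.subset_span (Set.mem_insert _ _)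
  refine ⟨⟨?_, ?_⟩, ?_⟩
  · rw [mul_assoc]
    exact Ideal.mul_mem_right _ _ (Ideal.pow_mem_pow hmem _)
  · have : h1 ^ m11 * z ∈ Ideal.span {h1, v2} ^ (m11 + (m12 - m11)) :=
      pow_add (Ideal.span {h1, v2}) _ _ ▸ Ideal.mul_mem_mul (Ideal.pow_mem_pow hmem _) hz
    rw [mul_right_comm]
    exact Ideal.mul_mem_right _ _ (Ideal.pow_le_pow_right (by omega) this)
  · rw [mul_comm (h1 ^ m11), mul_assoc]
    exact Ideal.mul_mem_right _ _ (Ideal.pow_mem_pow hmem _)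

theorem span_mul_fatIdeal_sup_eq (h1 h2 v1 v2 : A) (m11 m12 m21 : ℕ)
    (hsup : fatIdeal h1 h2 v1 v2 m11 m12 m21 ≤
      Ideal.span {v1} * fatIdeal h1 h2 v1 v2 (m11 - 1) m12 (m21 - 1) ⊔
        Ideal.span {h1 ^ m11 * h2 ^ m21} * Ideal.span {h1, v2} ^ (m12 - m11)) :
    Ideal.span {v1} * fatIdeal h1 h2 v1 v2 (m11 - 1) m12 (m21 - 1) ⊔
        Ideal.span {h1 ^ m11 * h2 ^ m21} * Ideal.span {h1, v2} ^ (m12 - m11) =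
      fatIdeal h1 h2 v1 v2 m11 m12 m21 :=
  le_antisymm (sup_le (span_singleton_mul_fatIdeal_le ..) (span_mul_span_pair_pow_le_fatIdeal ..))
    hsup

theorem span_mul_fatIdeal_inf_eq (h1 h2 v1 v2 : A) (m11 m12 m21 : ℕ)
    (hcolon : Ideal.span {v1} ⊓
        Ideal.span {h1 ^ m11 * h2 ^ m21} * Ideal.span {h1, v2} ^ (m12 - m11) ≤
      Ideal.span {v1} * (Ideal.span {h1 ^ m11 * h2 ^ m21} * Ideal.span {h1, v2} ^ (m12 - m11))) :
    Ideal.span {v1} * fatIdeal h1 h2 v1 v2 (m11 - 1) m12 (m21 - 1) ⊓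
        Ideal.span {h1 ^ m11 * h2 ^ m21} * Ideal.span {h1, v2} ^ (m12 - m11) =
      Ideal.span {v1 * h1 ^ m11 * h2 ^ m21} * Ideal.span {h1, v2} ^ (m12 - m11) := by
  have hJ := (span_mul_span_pair_pow_le_fatIdeal h1 h2 v1 v2 m11 m12 m21).trans
    (fatIdeal_anti (Nat.sub_le m11 1) le_rfl (Nat.sub_le m21 1))
  rw [mul_assoc v1, ← Ideal.span_singleton_mul_span_singleton v1, mul_assoc (Ideal.span {v1})]
  exact le_antisymm ((inf_le_inf_right _ Ideal.mul_le_left).trans hcolon)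
    (le_inf (Ideal.mul_mono_right hJ) Ideal.mul_le_right)

end FatPoints

section Monomial

open Finsupp

variable {R : Type*} [CommSemiring R]

theorem mem_fatIdeal_X_iff {p : MvPolynomial (Fin 4) R} {m11 m12 m21 : ℕ} :
    p ∈ fatIdeal (X 0) (X 1) (X 2) (X 3) m11 m12 m21 ↔
      ∀ d ∈ p.support, m11 ≤ d 0 + d 2 ∧ m12 ≤ d 0 + d 3 ∧ m21 ≤ d 1 + d 2 := by
  simp only [fatIdeal, Ideal.mem_inf, mem_span_X_pair_pow_iff (by decide : (0 : Fin 4) ≠ 2),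
    mem_span_X_pair_pow_iff (by decide : (0 : Fin 4) ≠ 3),
    mem_span_X_pair_pow_iff (by decide : (1 : Fin 4) ≠ 2), ← forall₂_and, and_assoc]

theorem fatIdeal_X_le_sup (m11 m12 m21 : ℕ) :
    fatIdeal (X 0 : MvPolynomial (Fin 4) R) (X 1) (X 2) (X 3) m11 m12 m21 ≤
      Ideal.span {X 2} * fatIdeal (X 0) (X 1) (X 2) (X 3) (m11 - 1) m12 (m21 - 1) ⊔
        Ideal.span {X 0 ^ m11 * X 1 ^ m21} * Ideal.span {X 0, X 3} ^ (m12 - m11) := by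
  intro p hp
  rw [← support_sum_monomial_coeff p]
  refine Ideal.sum_mem _ fun d hd => ?_
  obtain ⟨h02, h03, h12⟩ := mem_fatIdeal_X_iff.mp hp d hd
  rcases Nat.eq_zero_or_pos (d 2) with hd2 | hd2
  · refine Ideal.mem_sup_right (Ideal.mem_span_singleton_mul.mpr ?_)
    have hle : single 0 m11 + single 1 m21 ≤ d := fun l => by
      fin_cases l <;> simp <;> omega
    refine ⟨monomial (d - (single 0 m11 + single 1 m21)) (coeff d p), ?_, ?_⟩
    · refine (mem_span_X_pair_pow_iff (by decide)).mpr fun e he => ?_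
      rw [Finset.mem_singleton.mp (support_monomial_subset he)]
      simp
      omega
    · rw [X_pow_mul_X_pow, monomial_mul, one_mul, add_tsub_cancel_of_le hle]
  · refine Ideal.mem_sup_left (Ideal.mem_span_singleton_mul.mpr ?_)
    have hle : single 2 1 ≤ d := single_le_iff.mpr hd2
    refine ⟨monomial (d - single 2 1) (coeff d p), ?_, ?_⟩
    · refine mem_fatIdeal_X_iff.mpr fun e he => ?_
      rw [Finset.mem_singleton.mp (support_monomial_subset he)]
      simp
      omega
    · rw [mul_comm, ← pow_one (X 2), ← monomial_add_single, tsub_add_cancel_of_le hle]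

theorem span_X_inf_span_X_pow_mul_le (m11 m21 n : ℕ) :
    Ideal.span {X 2} ⊓ Ideal.span {X 0 ^ m11 * X 1 ^ m21} * Ideal.span {X 0, X 3} ^ n ≤
      Ideal.span {(X 2 : MvPolynomial (Fin 4) R)} *
        (Ideal.span {X 0 ^ m11 * X 1 ^ m21} * Ideal.span {X 0, X 3} ^ n) := by
  have hs : ({X 0, X 3} : Set (MvPolynomial (Fin 4) R)) = X '' ↑({0, 3} : Finset (Fin 4)) := by
    simp [Set.image_pair]
  rw [X_pow_mul_X_pow, hs]
  exact span_X_inf_span_monomial_mul_le (by decide) (by simp) n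

end Monomial

theorem fat_three_points_short_exact_sequence_general
    {k : Type*} [Field k]
    (h1 h2 v1 v2 : MvPolynomial (Fin 4) k)
    (hh1 : h1 ∈ Submodule.span k ({X 0, X 1} : Set (MvPolynomial (Fin 4) k)))
    (hh2 : h2 ∈ Submodule.span k ({X 0, X 1} : Set (MvPolynomial (Fin 4) k)))
    (hhind : LinearIndependent k ![h1, h2])
    (hv1 : v1 ∈ Submodule.span k ({X 2, X 3} : Set (MvPolynomial (Fin 4) k)))
    (hv2 : v2 ∈ Submodule.span k ({X 2, X 3} : Set (MvPolynomial (Fin 4) k)))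
    (hvind : LinearIndependent k ![v1, v2])
    (m11 m12 m21 : ℕ)
    (IW IW1 : Ideal (MvPolynomial (Fin 4) k))
    (hIW : IW = Ideal.span {h1, v1} ^ m11 ⊓ Ideal.span {h1, v2} ^ m12 ⊓
        Ideal.span {h2, v1} ^ m21)
    (hIW1 : IW1 = Ideal.span {h1, v1} ^ (m11 - 1) ⊓ Ideal.span {h1, v2} ^ m12 ⊓
        Ideal.span {h2, v1} ^ (m21 - 1))
    (I J : Ideal (MvPolynomial (Fin 4) k))
    (hI : I = Ideal.span {v1} * IW1)
    (hJ : J = Ideal.span {h1 ^ m11 * h2 ^ m21} * Ideal.span {h1, v2} ^ (m12 - m11)) :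
    Function.Injective
      (LinearMap.prod (Submodule.inclusion (inf_le_left : I ⊓ J ≤ I))
        (-(Submodule.inclusion (inf_le_right : I ⊓ J ≤ J)))) ∧
    LinearMap.range
      (LinearMap.prod (Submodule.inclusion (inf_le_left : I ⊓ J ≤ I))
        (-(Submodule.inclusion (inf_le_right : I ⊓ J ≤ J)))) =
      LinearMap.ker (LinearMap.coprod (Submodule.subtype I) (Submodule.subtype J)) ∧
    LinearMap.range (LinearMap.coprod (Submodule.subtype I) (Submodule.subtype J)) =
      I ⊔ J ∧
    I ⊔ J = IW ∧
    I ⊓ J = Ideal.span {v1 * h1 ^ m11 * h2 ^ m21} * Ideal.span {h1, v2} ^ (m12 - m11) := by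
  obtain ⟨e, rfl, rfl, rfl, rfl⟩ := exists_ringEquiv_X_eq hh1 hh2 hhind hv1 hv2 hvind
  subst hIW hIW1 hI hJ
  have hsup := Ideal.map_mono (f := e) (fatIdeal_X_le_sup m11 m12 m21)
  have hcolon := Ideal.map_mono (f := e) (span_X_inf_span_X_pow_mul_le m11 m21 (m12 - m11))
  simp only [map_fatIdeal, Ideal.map_sup, Ideal.map_ringEquiv_inf, Ideal.map_mul, Ideal.map_pow,
    Ideal.map_span, Set.image_singleton, Set.image_pair, map_mul, map_pow] at hsup hcolon
  exact ⟨Submodule.injective_inclusion_prod_neg_inclusion _ _,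
    Submodule.range_inclusion_prod_neg_inclusion _ _, (Submodule.sup_eq_range _ _).symm,
    span_mul_fatIdeal_sup_eq _ _ _ _ m11 m12 m21 hsup,
    span_mul_fatIdeal_inf_eq _ _ _ _ m11 m12 m21 hcolon⟩

/-- Proposition 2.10: with `I = v1·I_{W1}` and `J = h1^{m11} h2^{m21}·(h1,v2)^{(m12-m11)_+}`,
the sequence `0 → I ∩ J → I ⊕ J → I + J → 0` (with maps `x ↦ (x, -x)` and `(x,y) ↦ x + y`)
is a short exact sequence of `R`-modules; moreover `I + J = I_W` and
`I ∩ J = v1 h1^{m11} h2^{m21}·(h1,v2)^{(m12-m11)_+}`. -/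
theorem fat_three_points_short_exact_sequence
    {k : Type*} [Field k]
    (h1 h2 v1 v2 : MvPolynomial (Fin 4) k)
    (hh1 : h1 ∈ Submodule.span k ({X 0, X 1} : Set (MvPolynomial (Fin 4) k)))
    (hh2 : h2 ∈ Submodule.span k ({X 0, X 1} : Set (MvPolynomial (Fin 4) k)))
    (hhind : LinearIndependent k ![h1, h2])
    (hv1 : v1 ∈ Submodule.span k ({X 2, X 3} : Set (MvPolynomial (Fin 4) k)))
    (hv2 : v2 ∈ Submodule.span k ({X 2, X 3} : Set (MvPolynomial (Fin 4) k)))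
    (hvind : LinearIndependent k ![v1, v2])
    (m11 m12 m21 : ℕ) (hm : m21 ≤ m12)
    (IW IW1 : Ideal (MvPolynomial (Fin 4) k))
    (hIW : IW = Ideal.span {h1, v1} ^ m11 ⊓ Ideal.span {h1, v2} ^ m12 ⊓
        Ideal.span {h2, v1} ^ m21)
    (hIW1 : IW1 = Ideal.span {h1, v1} ^ (m11 - 1) ⊓ Ideal.span {h1, v2} ^ m12 ⊓
        Ideal.span {h2, v1} ^ (m21 - 1))
    (I J : Ideal (MvPolynomial (Fin 4) k))
    (hI : I = Ideal.span {v1} * IW1)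
    (hJ : J = Ideal.span {h1 ^ m11 * h2 ^ m21} * Ideal.span {h1, v2} ^ (m12 - m11)) :
    Function.Injective
      (LinearMap.prod (Submodule.inclusion (inf_le_left : I ⊓ J ≤ I))
        (-(Submodule.inclusion (inf_le_right : I ⊓ J ≤ J)))) ∧
    LinearMap.range
      (LinearMap.prod (Submodule.inclusion (inf_le_left : I ⊓ J ≤ I))
        (-(Submodule.inclusion (inf_le_right : I ⊓ J ≤ J)))) =
      LinearMap.ker (LinearMap.coprod (Submodule.subtype I) (Submodule.subtype J)) ∧
    LinearMap.range (LinearMap.coprod (Submodule.subtype I) (Submodule.subtype J)) =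
      I ⊔ J ∧
    I ⊔ J = IW ∧
    I ⊓ J = Ideal.span {v1 * h1 ^ m11 * h2 ^ m21} * Ideal.span {h1, v2} ^ (m12 - m11) :=
  fat_three_points_short_exact_sequence_general h1 h2 v1 v2 hh1 hh2 hhind hv1 hv2 hvind m11 m12 m21
    IW IW1 hIW hIW1 I J hI hJ
end

section
/- Set J_{Z1} = (Q1,U1)^{(m11−1)_+} ∩ (Q1,U2)^{m12} ∩ (Q2,U1)^{(m21−1)_+}. Then (U1·J_{Z1}) ∩ (Q1^{m11} Q2^{m21}·(Q1,U2)^{(m12−m11)_+}) = U1 Q1^{m11} Q2^{m21}·(Q1,U2)^{(m12−m11)_+}, where for a polynomial f and an ideal I, f·I denotes the ideal of all multiples of elements of I by f. -/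
/-!
Write `c = Q1 ^ m11 * Q2 ^ m21` and `K = (Q1, U2) ^ (m12 - m11)`. Since `c K ⊆ J_{Z1}`, the
intersection is `(U1) ∩ c K`, and this equals `U1 c K` as soon as `c` is coprime to `U1` and `U1`
is a nonzerodivisor modulo `K`. Coprimality holds because each `H i` is prime (`(H i)` is the
kernel of the substitution solving `H i = 0` for one variable) and does not divide any `V j`,
which lives in the other two variables.

For the nonzerodivisor property, `Q1, U2` behave like a regular sequence: the inclusion
`(Q1, U2) ^ (e + 1) ⊆ Q1 (Q1, U2) ^ e + (U2 ^ (e + 1))` gives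
`(Q1, U2) ^ (e + 1) : Q1 = (Q1, U2) ^ e`, and with it an induction on `e` reduces regularity modulo
`(Q1, U2) ^ e` to regularity modulo the ideals `(Q1, U2 ^ n)`. Factor by factor, this reduces to
`V l` being regular modulo `(H i, V j)` for `l ≠ j`; that ideal is the kernel of a substitution
solving `H i = V j = 0`, hence prime, and `V l` is not in it because `V l` and `V j` are
independent.
-/

open Ideal

section Regularity

variable {R : Type*} [CommRing R]

theorem Ideal.sup_pow_succ_le (A B : Ideal R) (e : ℕ) :
    (A ⊔ B) ^ (e + 1) ≤ A * (A ⊔ B) ^ e ⊔ B ^ (e + 1) := by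
  induction e with
  | zero => simp
  | succ e ih =>
    calc (A ⊔ B) ^ (e + 2) = A * (A ⊔ B) ^ (e + 1) ⊔ B * (A ⊔ B) ^ (e + 1) := by
          rw [pow_succ', sup_mul]
      _ ≤ A * (A ⊔ B) ^ (e + 1) ⊔ B * (A * (A ⊔ B) ^ e ⊔ B ^ (e + 1)) :=
          sup_le_sup_left (mul_mono_right ih) _
      _ ≤ A * (A ⊔ B) ^ (e + 1) ⊔ B ^ (e + 2) := by
          rw [mul_sup, ← sup_assoc, ← pow_succ']
          refine sup_le_sup_right (sup_le le_rfl ?_) _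
          rw [mul_left_comm, pow_succ']
          exact mul_mono_right (mul_mono_left le_sup_right)

theorem Ideal.span_pair_pow_succ_le (q u : R) (e : ℕ) :
    span {q, u} ^ (e + 1) ≤ span {q} * span {q, u} ^ e ⊔ span {u ^ (e + 1)} := by
  simpa only [← span_insert, span_singleton_pow] using sup_pow_succ_le (span {q}) (span {u}) e

theorem Ideal.span_pow_mul_pow_mul_span_pair_pow_le (q₁ q₂ u₁ u₂ : R)
    (m₁₁ m₁₂ m₂₁ : ℕ) :
    span {q₁ ^ m₁₁ * q₂ ^ m₂₁} * span {q₁, u₂} ^ (m₁₂ - m₁₁) ≤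
      span {q₁, u₁} ^ (m₁₁ - 1) ⊓ span {q₁, u₂} ^ m₁₂ ⊓ span {q₂, u₁} ^ (m₂₁ - 1) := by
  have hpow {a b : R} (m : ℕ) : a ^ m ∈ span {a, b} ^ m := pow_mem_pow (subset_span (by simp)) m
  refine le_inf (le_inf (mul_le_left.trans ?_) ?_) (mul_le_left.trans ?_)
  · exact (span_singleton_le_iff_mem _).mpr <| mul_mem_right _ _ <|
      pow_le_pow_right (Nat.sub_le _ _) (hpow m₁₁)
  · calc _ ≤ span {q₁, u₂} ^ m₁₁ * span {q₁, u₂} ^ (m₁₂ - m₁₁) :=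
          mul_mono_left ((span_singleton_le_iff_mem _).mpr (mul_mem_right _ _ (hpow m₁₁)))
      _ ≤ span {q₁, u₂} ^ m₁₂ := by rw [← pow_add]; exact pow_le_pow_right (by omega)
  · exact (span_singleton_le_iff_mem _).mpr <| mul_mem_left _ _ <|
      pow_le_pow_right (Nat.sub_le _ _) (hpow m₂₁)

theorem Ideal.IsPrime.isSMulRegular_quotient {P : Ideal R}
    (hP : P.IsPrime) {v : R} (hv : v ∉ P) : IsSMulRegular (R ⧸ P) v :=
  (isSMulRegular_quotient_iff_mem_of_smul_mem P v).mpr fun _ hx =>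
    (hP.mem_or_mem hx).resolve_left hv

variable [DecompositionMonoid R]

theorem Ideal.mem_span_pair_pow_of_mul_mem {q u x : R} (hqu : IsRelPrime q u) {e : ℕ}
    (h : q * x ∈ span {q, u} ^ (e + 1)) : x ∈ span {q, u} ^ e := by
  obtain ⟨_, hqy, _, hz, hqx⟩ := Submodule.mem_sup.mp (span_pair_pow_succ_le q u e h)
  obtain ⟨y, hy, rfl⟩ := mem_span_singleton_mul.mp hqy
  obtain ⟨z, rfl⟩ := mem_span_singleton'.mp hz
  obtain ⟨w, hw⟩ := hqu.symm.pow_left.dvd_of_dvd_mul_left (show u ^ (e + 1) ∣ q * (x - y) from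
    ⟨z, by linear_combination -hqx⟩)
  rw [show x = y + u ^ (e + 1) * w by linear_combination hw]
  exact add_mem hy <| mul_mem_right _ _ <|
    pow_le_pow_right e.le_succ (pow_mem_pow (subset_span (by simp)) _)

theorem isSMulRegular_quotient_span_pair_pow {q u v : R} (hqu : IsRelPrime q u)
    (hv : ∀ n, IsSMulRegular (R ⧸ span {q, u ^ n}) v) (e : ℕ) :
    IsSMulRegular (R ⧸ span {q, u} ^ e) v := by
  simp only [isSMulRegular_quotient_iff_mem_of_smul_mem, smul_eq_mul] at hv ⊢
  induction e with
  | zero => simp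
  | succ e ih =>
    intro g hg
    have hq : q ∈ span {q, u} := subset_span (by simp)
    have hu : u ^ (e + 1) ∈ span {q, u} ^ (e + 1) := pow_mem_pow (subset_span (by simp)) _
    have hle : span {q, u} ^ (e + 1) ≤ span {q, u ^ (e + 1)} :=
      (span_pair_pow_succ_le q u e).trans <| (sup_le_sup_right mul_le_left _).trans_eq
        (span_insert q {u ^ (e + 1)}).symm
    obtain ⟨p, r, rfl⟩ := mem_span_pair.mp (hv (e + 1) g (hle hg))
    have hvp : q * (v * p) ∈ span {q, u} ^ (e + 1) := by
      convert sub_mem hg (mul_mem_left _ (v * r) hu) using 1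
      ring
    have hp := ih _ (mem_span_pair_pow_of_mul_mem hqu hvp)
    exact add_mem (pow_succ (span {q, u}) e ▸ mul_mem_mul hp hq) (mul_mem_left _ _ hu)

theorem IsSMulRegular.quotient_span_pair_mul_left {a a' b v : R} (hab : IsRelPrime a b)
    (h : IsSMulRegular (R ⧸ span {a, b}) v) (h' : IsSMulRegular (R ⧸ span {a', b}) v) :
    IsSMulRegular (R ⧸ span {a * a', b}) v := by
  simp only [isSMulRegular_quotient_iff_mem_of_smul_mem, smul_eq_mul, mem_span_pair] at h h' ⊢
  rintro g ⟨s, t, hg⟩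
  obtain ⟨α, β, rfl⟩ := h g ⟨s * a', t, by linear_combination hg⟩
  obtain ⟨σ, hσ⟩ := hab.symm.dvd_of_dvd_mul_left (show b ∣ a * (v * α - s * a') from
    ⟨t - v * β, by linear_combination -hg⟩)
  obtain ⟨γ, δ, rfl⟩ := h' α ⟨s, σ, by linear_combination -hσ⟩
  exact ⟨γ, δ * a + β, by ring⟩

theorem IsSMulRegular.quotient_span_pair_prod_left {ι : Type*} {s : Finset ι} {f : ι → R}
    {b v : R} (hrel : ∀ i ∈ s, IsRelPrime (f i) b)
    (h : ∀ i ∈ s, IsSMulRegular (R ⧸ span {f i, b}) v) :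
    IsSMulRegular (R ⧸ span {∏ i ∈ s, f i, b}) v := by
  refine (Finset.prod_induction f (fun a => IsRelPrime a b ∧ IsSMulRegular (R ⧸ span {a, b}) v)
    (fun a a' ha ha' => ⟨ha.1.mul_left ha'.1, ha.2.quotient_span_pair_mul_left ha.1 ha'.2⟩)
    ⟨isRelPrime_one_left, ?_⟩ fun i hi => ⟨hrel i hi, h i hi⟩).2
  exact (isSMulRegular_quotient_iff_mem_of_smul_mem _ _).mpr
    fun x _ => mem_span_pair.mpr ⟨x, 0, by ring⟩

theorem IsSMulRegular.quotient_span_pair_prod_right {ι : Type*} {s : Finset ι} {f : ι → R}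
    {a v : R} (hrel : ∀ i ∈ s, IsRelPrime a (f i))
    (h : ∀ i ∈ s, IsSMulRegular (R ⧸ span {a, f i}) v) :
    IsSMulRegular (R ⧸ span {a, ∏ i ∈ s, f i}) v := by
  rw [Set.pair_comm]
  exact quotient_span_pair_prod_left (fun i hi => (hrel i hi).symm)
    fun i hi => Set.pair_comm a (f i) ▸ h i hi

theorem IsSMulRegular.quotient_span_pair_pow_right {a b v : R} (hab : IsRelPrime a b)
    (h : IsSMulRegular (R ⧸ span {a, b}) v) (n : ℕ) :
    IsSMulRegular (R ⧸ span {a, b ^ n}) v := by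
  have := quotient_span_pair_prod_right (s := Finset.range n) (f := fun _ => b)
    (fun _ _ => hab) fun _ _ => h
  rwa [Finset.prod_const, Finset.card_range] at this

theorem IsSMulRegular.quotient_span_prod_prod_pow {ι : Type*} {s t : Finset ι} {f g : ι → R}
    {v : R} (hrel : ∀ i ∈ s, ∀ j ∈ t, IsRelPrime (f i) (g j))
    (h : ∀ i ∈ s, ∀ j ∈ t, IsSMulRegular (R ⧸ span {f i, g j}) v) (e : ℕ) :
    IsSMulRegular (R ⧸ span {∏ i ∈ s, f i, ∏ j ∈ t, g j} ^ e) v := by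
  have hrel' (i) (hi : i ∈ s) : IsRelPrime (f i) (∏ j ∈ t, g j) :=
    IsRelPrime.prod_right (hrel i hi)
  refine isSMulRegular_quotient_span_pair_pow (IsRelPrime.prod_left hrel') (fun n => ?_) e
  exact quotient_span_pair_prod_left (fun i hi => (hrel' i hi).pow_right) fun i hi =>
    (quotient_span_pair_prod_right (hrel i hi) (h i hi)).quotient_span_pair_pow_right
      (hrel' i hi) n

theorem Ideal.span_singleton_mul_inf_span_singleton_mul [IsDomain R] {u c : R}
    {J K : Ideal R} (hcu : IsRelPrime c u) (hu : IsSMulRegular (R ⧸ K) u)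
    (hJ : span {c} * K ≤ J) :
    span {u} * J ⊓ span {c} * K = span {u * c} * K := by
  rw [← span_singleton_mul_span_singleton, mul_assoc]
  refine le_antisymm (fun x hx => ?_) (le_inf (mul_mono_right hJ) mul_le_right)
  obtain ⟨⟨h, -, rfl⟩, ⟨g, hg, hgx⟩⟩ := And.imp mem_span_singleton_mul.mp
    mem_span_singleton_mul.mp (Submodule.mem_inf.mp hx)
  obtain ⟨h', rfl⟩ := hcu.dvd_of_dvd_mul_left ⟨g, hgx.symm⟩
  rcases eq_or_ne c 0 with rfl | hc
  · simp
  have hg' : g = u * h' := mul_left_cancel₀ hc (by linear_combination hgx)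
  rw [isSMulRegular_quotient_iff_mem_of_smul_mem] at hu
  have hh' : h' ∈ K := hu h' (by rwa [smul_eq_mul, ← hg'])
  exact mem_span_singleton_mul.mpr ⟨c * h', mem_span_singleton_mul.mpr ⟨h', hh', rfl⟩, rfl⟩

end Regularity

namespace MvPolynomial

variable {σ : Type*}

theorem sub_aeval_mem {R : Type*} [CommRing R] {v : σ → MvPolynomial σ R}
    {I : Ideal (MvPolynomial σ R)} (hv : ∀ i, X i - v i ∈ I) (f : MvPolynomial σ R) :
    f - aeval v f ∈ I := by
  have : (Ideal.Quotient.mkₐ R I).comp (aeval v) = Ideal.Quotient.mkₐ R I :=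
    algHom_ext fun i => Ideal.Quotient.eq.mpr (by simpa using I.neg_mem (hv i))
  exact Ideal.Quotient.eq.mp (AlgHom.congr_fun this f).symm

variable {k : Type*} [Field k]

noncomputable def projAlong (L : MvPolynomial σ k) (w : σ → k) :
    MvPolynomial σ k →ₐ[k] MvPolynomial σ k :=
  aeval fun l => X l - w l • L

variable {L : MvPolynomial σ k} {w : σ → k}

theorem sub_projAlong_mem (f : MvPolynomial σ k) : f - projAlong L w f ∈ Ideal.span {L} :=
  sub_aeval_mem (fun l => by
    simpa using Submodule.smul_of_tower_mem _ (w l) (Ideal.mem_span_singleton_self L)) f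

theorem projAlong_smul_add_smul (a b : k) (i j : σ) :
    projAlong L w (a • X i + b • X j) = a • X i + b • X j - (a * w i + b * w j) • L := by
  simp only [projAlong, map_add, map_smul, aeval_X]
  module

theorem ker_projAlong (h : projAlong L w L = 0) : RingHom.ker (projAlong L w) = Ideal.span {L} :=
  le_antisymm
    (fun f hf => by simpa [RingHom.mem_ker.mp hf] using sub_projAlong_mem (L := L) (w := w) f)
    ((Ideal.span_singleton_le_iff_mem _).mpr h)

variable {i j i' j' : σ}

theorem exists_projAlong_eq_zero (hij : i ≠ j) (hL : L ∈ Submodule.span k {X i, X j})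
    (hL0 : L ≠ 0) : ∃ w : σ → k, projAlong L w L = 0 ∧ ∀ l, l ≠ i → l ≠ j → w l = 0 := by
  classical
  obtain ⟨a, b, rfl⟩ := Submodule.mem_span_pair.mp hL
  suffices ∃ w : σ → k, a * w i + b * w j = 1 ∧ ∀ l, l ≠ i → l ≠ j → w l = 0 by
    obtain ⟨w, h1, h2⟩ := this
    exact ⟨w, by rw [projAlong_smul_add_smul, h1, one_smul, sub_self], h2⟩
  by_cases ha : a = 0
  · have hb : b ≠ 0 := by rintro rfl; simp [ha] at hL0
    exact ⟨Pi.single j b⁻¹, by simp [ha, hb], fun l _ hl => Pi.single_eq_of_ne hl _⟩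
  · exact ⟨Pi.single i a⁻¹, by simp [ha, hij.symm], fun l hl _ => Pi.single_eq_of_ne hl _⟩

theorem prime_of_mem_span_pair_X (hij : i ≠ j) (hL : L ∈ Submodule.span k {X i, X j})
    (hL0 : L ≠ 0) : Prime L := by
  obtain ⟨w, hw, -⟩ := exists_projAlong_eq_zero hij hL hL0
  rw [← Ideal.span_singleton_prime hL0, ← ker_projAlong hw]
  exact RingHom.ker_isPrime _

theorem isRelPrime_of_mem_span_pair_X (hij : i ≠ j) (hi' : i' ≠ i ∧ i' ≠ j)
    (hj' : j' ≠ i ∧ j' ≠ j)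
    (hL : L ∈ Submodule.span k {X i, X j}) (hL0 : L ≠ 0) {M : MvPolynomial σ k}
    (hM : M ∈ Submodule.span k {X i', X j'}) (hM0 : M ≠ 0) : IsRelPrime L M := by
  obtain ⟨w, hw, hw0⟩ := exists_projAlong_eq_zero hij hL hL0
  refine (prime_of_mem_span_pair_X hij hL hL0).irreducible.isRelPrime_iff_not_dvd.mpr
    fun hdvd => hM0 ?_
  have hker : M ∈ RingHom.ker (projAlong L w) :=
    ker_projAlong hw ▸ Ideal.mem_span_singleton.mpr hdvd
  obtain ⟨c, d, rfl⟩ := Submodule.mem_span_pair.mp hM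
  simpa [projAlong_smul_add_smul, hw0 i' hi'.1 hi'.2, hw0 j' hj'.1 hj'.2] using hker

theorem isSMulRegular_quotient_of_mem_span_pair_X (hij : i ≠ j) (hij' : i' ≠ j')
    (hi' : i' ≠ i ∧ i' ≠ j) (hj' : j' ≠ i ∧ j' ≠ j)
    (hL : L ∈ Submodule.span k {X i, X j}) (hL0 : L ≠ 0) {M V : MvPolynomial σ k}
    (hM : M ∈ Submodule.span k {X i', X j'}) (hV : V ∈ Submodule.span k {X i', X j'})
    (hind : LinearIndependent k ![V, M]) :
    IsSMulRegular (MvPolynomial σ k ⧸ Ideal.span {L, M}) V := by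
  obtain ⟨w₁, hw₁, hw₁0⟩ := exists_projAlong_eq_zero hij hL hL0
  obtain ⟨w₂, hw₂, -⟩ := exists_projAlong_eq_zero hij' hM (hind.ne_zero 1)
  have hfix {N} (hN : N ∈ Submodule.span k {X i', X j'}) : projAlong L w₁ N = N := by
    obtain ⟨c, d, rfl⟩ := Submodule.mem_span_pair.mp hN
    simp [projAlong_smul_add_smul, hw₁0 i' hi'.1 hi'.2, hw₁0 j' hj'.1 hj'.2]
  let φ := (projAlong M w₂).comp (projAlong L w₁)
  have hker : RingHom.ker φ = Ideal.span {L, M} := by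
    refine le_antisymm (fun f hf => ?_) ?_
    · have hφf : projAlong M w₂ (projAlong L w₁ f) = 0 := hf
      have h₁ : f - projAlong L w₁ f ∈ Ideal.span {L, M} :=
        Ideal.span_mono (by simp) (sub_projAlong_mem f)
      have h₂ : projAlong L w₁ f - projAlong M w₂ (projAlong L w₁ f) ∈ Ideal.span {L, M} :=
        Ideal.span_mono (by simp) (sub_projAlong_mem _)
      simpa [hφf] using add_mem h₁ h₂
    · simp [Ideal.span_le, Set.insert_subset_iff, φ, hw₁, hfix hM, hw₂]
  rw [← hker]
  refine (RingHom.ker_isPrime φ).isSMulRegular_quotient fun hVφ => ?_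
  obtain ⟨c, d, rfl⟩ := Submodule.mem_span_pair.mp hV
  have h0 : (1 : k) • (c • X i' + d • X j') + (-(c * w₂ i' + d * w₂ j')) • M = 0 := by
    rw [one_smul, neg_smul, ← sub_eq_add_neg]
    simpa [φ, hfix hV, projAlong_smul_add_smul] using hVφ
  exact one_ne_zero (LinearIndependent.pair_iff.mp hind _ _ h0).1

end MvPolynomial

theorem ne_zero_of_forall_linearIndependent_pair {K M : Type*} [Ring K] [Nontrivial K]
    [AddCommGroup M] [Module K M] {v : ℕ → M} {n : ℕ} (hn : 2 ≤ n)
    (h : ∀ i < n, ∀ j < n, i ≠ j → LinearIndependent K ![v i, v j]) {i : ℕ} (hi : i < n) :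
    v i ≠ 0 := by
  obtain ⟨j, hj, hij⟩ : ∃ j < n, i ≠ j :=
    ⟨if i = 0 then 1 else 0, by split_ifs <;> omega, by split_ifs <;> omega⟩
  simpa using (h i hi j hj hij).ne_zero 0

open MvPolynomial

theorem fat_ACI_intersection_general
    {k : Type*} [Field k]
    (α1 α2 β1 β2 : ℕ) (hα1 : 0 < α1) (hα2 : 0 < α2) (hβ1 : 0 < β1) (hβ2 : 0 < β2)
    (H V : ℕ → MvPolynomial (Fin 4) k)
    (hH : ∀ i < α1 + α2, H i ∈ Submodule.span k ({X 0, X 1} : Set (MvPolynomial (Fin 4) k)))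
    (hV : ∀ j < β1 + β2, V j ∈ Submodule.span k ({X 2, X 3} : Set (MvPolynomial (Fin 4) k)))
    (hHind : ∀ i < α1 + α2, ∀ j < α1 + α2, i ≠ j → LinearIndependent k ![H i, H j])
    (hVind : ∀ i < β1 + β2, ∀ j < β1 + β2, i ≠ j → LinearIndependent k ![V i, V j])
    (Q1 Q2 U1 U2 : MvPolynomial (Fin 4) k)
    (hQ1 : Q1 = ∏ i ∈ Finset.range α1, H i)
    (hQ2 : Q2 = ∏ i ∈ Finset.Ico α1 (α1 + α2), H i)
    (hU1 : U1 = ∏ j ∈ Finset.range β1, V j)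
    (hU2 : U2 = ∏ j ∈ Finset.Ico β1 (β1 + β2), V j)
    (m11 m12 m21 : ℕ)
    (JZ1 : Ideal (MvPolynomial (Fin 4) k))
    (hJZ1 : JZ1 = Ideal.span {Q1, U1} ^ (m11 - 1) ⊓ Ideal.span {Q1, U2} ^ m12 ⊓
        Ideal.span {Q2, U1} ^ (m21 - 1)) :
    (Ideal.span {U1} * JZ1) ⊓
        (Ideal.span {Q1 ^ m11 * Q2 ^ m21} * Ideal.span {Q1, U2} ^ (m12 - m11)) =
      Ideal.span {U1 * Q1 ^ m11 * Q2 ^ m21} * Ideal.span {Q1, U2} ^ (m12 - m11) := by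
  have hH0 (i) (hi : i < α1 + α2) : H i ≠ 0 :=
    ne_zero_of_forall_linearIndependent_pair (by omega) hHind hi
  have hV0 (j) (hj : j < β1 + β2) : V j ≠ 0 :=
    ne_zero_of_forall_linearIndependent_pair (by omega) hVind hj
  have hrel (i) (hi : i < α1 + α2) (j) (hj : j < β1 + β2) : IsRelPrime (H i) (V j) :=
    isRelPrime_of_mem_span_pair_X (by decide) (by decide) (by decide) (hH i hi) (hH0 i hi)
      (hV j hj) (hV0 j hj)
  have hreg (l) (hl : l < β1 + β2) (i) (hi : i < α1 + α2) (j) (hj : j < β1 + β2) (hlj : l ≠ j) :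
      IsSMulRegular (_ ⧸ Ideal.span {H i, V j}) (V l) :=
    isSMulRegular_quotient_of_mem_span_pair_X (by decide) (by decide) (by decide)
      (by decide) (hH i hi) (hH0 i hi) (hV j hj) (hV l hl) (hVind l hl j hj hlj)
  rw [mul_assoc U1, hJZ1]
  refine Ideal.span_singleton_mul_inf_span_singleton_mul ?_ ?_
    (Ideal.span_pow_mul_pow_mul_span_pair_pow_le _ _ _ _ _ _ _)
  · rw [hQ1, hQ2, hU1]
    refine IsRelPrime.mul_left (IsRelPrime.pow_left ?_) (IsRelPrime.pow_left ?_) <;>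
    refine IsRelPrime.prod_left fun i hi => IsRelPrime.prod_right fun j hj => hrel i ?_ j ?_ <;>
    simp only [Finset.mem_range, Finset.mem_Ico] at hi hj <;> omega
  · rw [hQ1, hU1, hU2]
    refine Finset.prod_induction _ _ (fun _ _ => IsSMulRegular.mul) (IsSMulRegular.one _)
      fun l hl => IsSMulRegular.quotient_span_prod_prod_pow (fun i hi j hj => ?_)
        (fun i hi j hj => ?_) _
    all_goals simp only [Finset.mem_range, Finset.mem_Ico] at hl hi hj
    · exact hrel i (by omega) j (by omega)
    · exact hreg l (by omega) i (by omega) j (by omega) (by omega)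

/-- Remark 3.2 + Proposition 2.9: the intersection
`(U1·J_{Z1}) ∩ (Q1^{m11} Q2^{m21}·(Q1,U2)^{(m12-m11)_+}) = U1 Q1^{m11} Q2^{m21}·(Q1,U2)^{(m12-m11)_+}`. -/
theorem fat_ACI_intersection
    {k : Type*} [Field k]
    (α1 α2 β1 β2 : ℕ) (hα1 : 0 < α1) (hα2 : 0 < α2) (hβ1 : 0 < β1) (hβ2 : 0 < β2)
    (H V : ℕ → MvPolynomial (Fin 4) k)
    (hH : ∀ i < α1 + α2, H i ∈ Submodule.span k ({X 0, X 1} : Set (MvPolynomial (Fin 4) k)))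
    (hV : ∀ j < β1 + β2, V j ∈ Submodule.span k ({X 2, X 3} : Set (MvPolynomial (Fin 4) k)))
    (hHind : ∀ i < α1 + α2, ∀ j < α1 + α2, i ≠ j → LinearIndependent k ![H i, H j])
    (hVind : ∀ i < β1 + β2, ∀ j < β1 + β2, i ≠ j → LinearIndependent k ![V i, V j])
    (Q1 Q2 U1 U2 : MvPolynomial (Fin 4) k)
    (hQ1 : Q1 = ∏ i ∈ Finset.range α1, H i)
    (hQ2 : Q2 = ∏ i ∈ Finset.Ico α1 (α1 + α2), H i)
    (hU1 : U1 = ∏ j ∈ Finset.range β1, V j)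
    (hU2 : U2 = ∏ j ∈ Finset.Ico β1 (β1 + β2), V j)
    (m11 m12 m21 : ℕ) (hm : m21 ≤ m12)
    (JZ1 : Ideal (MvPolynomial (Fin 4) k))
    (hJZ1 : JZ1 = Ideal.span {Q1, U1} ^ (m11 - 1) ⊓ Ideal.span {Q1, U2} ^ m12 ⊓
        Ideal.span {Q2, U1} ^ (m21 - 1)) :
    (Ideal.span {U1} * JZ1) ⊓
        (Ideal.span {Q1 ^ m11 * Q2 ^ m21} * Ideal.span {Q1, U2} ^ (m12 - m11)) =
      Ideal.span {U1 * Q1 ^ m11 * Q2 ^ m21} * Ideal.span {Q1, U2} ^ (m12 - m11) :=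
  fat_ACI_intersection_general α1 α2 β1 β2 hα1 hα2 hβ1 hβ2 H V hH hV hHind hVind Q1 Q2 U1 U2 hQ1 hQ2
    hU1 hU2 m11 m12 m21 JZ1 hJZ1
end

section
/- The ideal (Q1,U2)^{m12} ∩ (Q2,U1)^{m21} equals the ideal generated by the set of all products Q1^{a} Q2^{b} U1^{c} U2^{d} with a, b, c, d nonnegative integers satisfying a + d = m12 and b + c = m21. (This is the generator description, in degrees coming from the set D_0 of Lemma 3.3, of the defining ideal of a set of fat points whose support is the disjoint union of two fat complete intersections.) -/
/-!
Write `I = (Q1, U2)` and `J = (Q2, U1)`; the generators on the right span `I ^ m12 * J ^ m21`,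
so the claim is `I ^ m ⊓ J ^ n = I ^ m * J ^ n`.

For `m = n = 1` it suffices that `Q1, U2` is a regular sequence modulo `J`. Each factor is a
linear form `ℓ`, and regularity modulo an ideal is tested after substituting for one variable its
value on the hyperplane `ℓ = 0`. This substitution realizes `k[x] ⧸ (ℓ)` inside `k[x]`, fixes the
polynomials in the other pair of variables and maps the remaining forms of its own pair to nonzero
forms, so unique factorization in `k[x]` decides everything.

For higher powers one uses that `Q1, U2` (and `Q2, U1`) are coprime, hence `I` is quasi-regular:
`K * I ^ m ⊓ I ^ (m + 1) ≤ (K ⊓ I) * I ^ m` for every ideal `K`. Two inductions then lift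
`I ⊓ J = I * J` to all powers.
-/

open MvPolynomial

theorem IsSMulRegular.finset_prod {R M ι : Type*} [CommMonoid R] [MulAction R M]
    [IsScalarTower R R M] {s : Finset ι} {f : ι → R} (h : ∀ i ∈ s, IsSMulRegular M (f i)) :
    IsSMulRegular M (∏ i ∈ s, f i) :=
  Finset.prod_induction f _ (fun _ _ => IsSMulRegular.mul) (IsSMulRegular.one M) h

theorem ne_zero_of_linearIndependent_pair {R M : Type*} [Semiring R] [Nontrivial R]
    [AddCommMonoid M] [Module R M] {f : ℕ → M} {n : ℕ} (hn : 2 ≤ n)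
    (hf : ∀ i < n, ∀ j < n, i ≠ j → LinearIndependent R ![f i, f j]) {i : ℕ} (hi : i < n) :
    f i ≠ 0 := by
  obtain ⟨j, hj, hij⟩ : ∃ j < n, i ≠ j := by
    rcases eq_or_ne i 0 with rfl | hi0
    exacts [⟨1, by omega, by omega⟩, ⟨0, by omega, hi0⟩]
  simpa using (hf i hi j hj hij).ne_zero 0

namespace Ideal

variable {R : Type*} [CommRing R]

theorem span_pair_pow_succ (q u : R) (m : ℕ) :
    span {q, u} ^ (m + 1) = span {q} * span {q, u} ^ m ⊔ span {u ^ (m + 1)} := by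
  induction m with
  | zero => simp [span_insert]
  | succ m ih =>
    have hu : span {u ^ (m + 1) * q} ≤ span {q} * span {q, u} ^ (m + 1) := by
      rw [span_singleton_le_iff_mem, mul_comm (u ^ _)]
      exact mul_mem_mul (mem_span_singleton_self q) (pow_mem_pow (subset_span (by simp)) _)
    have hsplit : span {u ^ (m + 1)} * span {q, u}
        = span {u ^ (m + 1) * q} ⊔ span {u ^ (m + 1 + 1)} := by
      rw [span_insert q {u}, mul_sup, span_singleton_mul_span_singleton,
        span_singleton_mul_span_singleton, ← pow_succ]
    conv_lhs => rw [pow_succ, ih, sup_mul, mul_assoc, ← pow_succ, hsplit]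
    exact le_antisymm (sup_le le_sup_left (sup_le (hu.trans le_sup_left) le_sup_right))
      (sup_le_sup_left le_sup_right _)

theorem mem_mul_span_pair_pow_succ {K : Ideal R} {q u f : R} {m : ℕ} :
    f ∈ K * span {q, u} ^ (m + 1) ↔
      ∃ a ∈ K * span {q, u} ^ m, ∃ k ∈ K, f = q * a + u ^ (m + 1) * k := by
  rw [span_pair_pow_succ, mul_sup, mul_left_comm K, mul_comm K (span _), Submodule.mem_sup]
  simp only [mem_span_singleton_mul]
  constructor
  · rintro ⟨_, ⟨a, ha, rfl⟩, _, ⟨k, hk, rfl⟩, rfl⟩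
    exact ⟨a, ha, k, hk, rfl⟩
  · rintro ⟨a, ha, k, hk, rfl⟩
    exact ⟨_, ⟨a, ha, rfl⟩, _, ⟨k, hk, rfl⟩, rfl⟩

theorem mul_span_pair_pow_inf_pow_succ_le [IsDomain R] [DecompositionMonoid R] {q u : R}
    (hq : q ≠ 0) (hqu : IsRelPrime q u) (K : Ideal R) (m : ℕ) :
    K * span {q, u} ^ m ⊓ span {q, u} ^ (m + 1) ≤ (K ⊓ span {q, u}) * span {q, u} ^ m := by
  induction m with
  | zero => simp
  | succ m ih =>
    rintro f ⟨hfK, hfI⟩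
    obtain ⟨a, ha, k, hk, rfl⟩ := mem_mul_span_pair_pow_succ.mp hfK
    obtain ⟨b, hb, c, -, hbc⟩ :=
      mem_mul_span_pair_pow_succ.mp (by rwa [top_mul] : _ ∈ ⊤ * span {q, u} ^ (m + 1 + 1))
    rw [top_mul] at hb
    -- comparing the two expansions, `q` divides `u ^ (m + 1) * (u * c - k)`
    obtain ⟨t, ht⟩ : q ∣ u * c - k := (hqu.pow_right (n := m + 1)).dvd_of_dvd_mul_left
      ⟨a - b, by linear_combination -hbc⟩
    have hab : a - b = u ^ (m + 1) * t :=
      mul_left_cancel₀ hq (by linear_combination hbc + u ^ (m + 1) * ht)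
    have hkI : k ∈ span {q, u} := mem_span_pair.mpr ⟨-t, c, by linear_combination ht⟩
    have haI : a ∈ span {q, u} ^ (m + 1) := by
      rw [show a = b + u ^ (m + 1) * t by linear_combination hab]
      exact add_mem hb (mul_mem_right _ _ (pow_mem_pow (subset_span (by simp)) _))
    exact mem_mul_span_pair_pow_succ.mpr ⟨a, ih ⟨ha, haI⟩, k, ⟨hk, hkI⟩, rfl⟩

theorem span_pair_pow_inf_le_pow_mul [IsDomain R] [DecompositionMonoid R] {q u : R} (hq : q ≠ 0)
    (hqu : IsRelPrime q u) {J : Ideal R} (h : span {q, u} ⊓ J ≤ span {q, u} * J) (m : ℕ) :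
    span {q, u} ^ m ⊓ J ≤ span {q, u} ^ m * J := by
  induction m with
  | zero => simp
  | succ m ih =>
    calc span {q, u} ^ (m + 1) ⊓ J
        ≤ J * span {q, u} ^ m ⊓ span {q, u} ^ (m + 1) :=
          le_inf ((inf_le_inf_right J (pow_le_pow_right m.le_succ)).trans
            (ih.trans (mul_comm _ _).le)) inf_le_left
      _ ≤ (J ⊓ span {q, u}) * span {q, u} ^ m := mul_span_pair_pow_inf_pow_succ_le hq hqu J m
      _ ≤ span {q, u} ^ (m + 1) * J := by
          rw [inf_comm, pow_succ', mul_right_comm]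
          exact mul_mono_left h

theorem span_pair_pow_inf_span_pair_pow [IsDomain R] [DecompositionMonoid R] {q u q' u' : R}
    (hq : q ≠ 0) (hqu : IsRelPrime q u) (hq' : q' ≠ 0) (hqu' : IsRelPrime q' u')
    (h : span {q, u} ⊓ span {q', u'} ≤ span {q, u} * span {q', u'}) (m n : ℕ) :
    span {q, u} ^ m ⊓ span {q', u'} ^ n = span {q, u} ^ m * span {q', u'} ^ n := by
  refine le_antisymm ?_ mul_le_inf
  have hm := span_pair_pow_inf_le_pow_mul hq hqu h m
  rw [inf_comm, mul_comm] at hm ⊢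
  exact span_pair_pow_inf_le_pow_mul hq' hqu' hm n

theorem span_pair_inf_le_mul {J : Ideal R} {x y : R} (hx : IsSMulRegular (R ⧸ J) x)
    (hy : IsSMulRegular (R ⧸ (J ⊔ span {x})) y) : span {x, y} ⊓ J ≤ span {x, y} * J := by
  rintro f ⟨hfxy, hfJ⟩
  obtain ⟨a, b, rfl⟩ := mem_span_pair.mp (SetLike.mem_coe.mp hfxy)
  have hb : b ∈ J ⊔ span {x} := by
    refine mem_of_isSMulRegular_quotient_of_smul_mem hy ?_
    rw [smul_eq_mul, show y * b = (a * x + b * y) - a * x by ring]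
    exact sub_mem (mem_sup_left hfJ) (mem_sup_right (mul_mem_left _ _ (mem_span_singleton_self x)))
  obtain ⟨j, hj, _, he, rfl⟩ := Submodule.mem_sup.mp hb
  obtain ⟨e, rfl⟩ := mem_span_singleton'.mp he
  have hae : a + e * y ∈ J := by
    refine mem_of_isSMulRegular_quotient_of_smul_mem hx ?_
    rw [smul_eq_mul, show x * (a + e * y) = (a * x + (j + e * x) * y) - y * j by ring]
    exact sub_mem hfJ (mul_mem_left _ _ hj)
  rw [show a * x + (j + e * x) * y = x * (a + e * y) + y * j by ring]
  exact add_mem (mul_mem_mul (subset_span (by simp)) hae) (mul_mem_mul (subset_span (by simp)) hj)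

theorem span_pair_pow (q u : R) (m : ℕ) :
    span {q, u} ^ m = span {x | ∃ a d, a + d = m ∧ x = q ^ a * u ^ d} := by
  induction m with
  | zero =>
    rw [pow_zero, one_eq_top, eq_comm, eq_top_iff_one]
    exact subset_span ⟨0, 0, rfl, by simp⟩
  | succ m ih =>
    rw [pow_succ, ih, span_mul_span']
    congr 1
    ext x
    simp only [Set.mem_mul, Set.mem_ofPred_eq, Set.mem_insert_iff, Set.mem_singleton_iff]
    constructor
    · rintro ⟨_, ⟨a, d, had, rfl⟩, _, rfl | rfl, rfl⟩
      exacts [⟨a + 1, d, by omega, by ring⟩, ⟨a, d + 1, by omega, by ring⟩]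
    · rintro ⟨_ | a, d, had, rfl⟩
      · exact ⟨_, ⟨0, m, zero_add m, rfl⟩, u, Or.inr rfl,
          by rw [mul_assoc, ← pow_succ, ← had, zero_add]⟩
      · exact ⟨_, ⟨a, d, by omega, rfl⟩, q, Or.inl rfl, by ring⟩

theorem span_pair_pow_mul_span_pair_pow (q₁ u₂ q₂ u₁ : R) (m n : ℕ) :
    span {q₁, u₂} ^ m * span {q₂, u₁} ^ n =
      span {f | ∃ a b c d : ℕ, a + d = m ∧ b + c = n ∧ f = q₁ ^ a * q₂ ^ b * u₁ ^ c * u₂ ^ d} := by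
  rw [span_pair_pow, span_pair_pow, span_mul_span']
  congr 1
  ext f
  simp only [Set.mem_mul, Set.mem_ofPred_eq]
  constructor
  · rintro ⟨_, ⟨a, d, had, rfl⟩, _, ⟨b, c, hbc, rfl⟩, rfl⟩
    exact ⟨a, b, c, d, had, hbc, by ring⟩
  · rintro ⟨a, b, c, d, had, hbc, rfl⟩
    exact ⟨_, ⟨a, d, had, rfl⟩, _, ⟨b, c, hbc, rfl⟩, by ring⟩

theorem isSMulRegular_quotient_span_singleton_of_isRelPrime [DecompositionMonoid R] {u v : R}
    (h : IsRelPrime u v) : IsSMulRegular (R ⧸ span {u}) v := by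
  refine (isSMulRegular_quotient_iff_mem_of_smul_mem _ _).mpr fun x hx => ?_
  rw [smul_eq_mul, mem_span_singleton] at hx
  exact mem_span_singleton.mpr (h.dvd_of_dvd_mul_left hx)

section Retraction

-- Such an `ε` realizes `R ⧸ (ℓ)` as a subring of `R`.
variable {ℓ : R} {ε : R →+* R} (hεℓ : ε ℓ = 0) (hε : ∀ f, ℓ ∣ f - ε f)
include hεℓ hε

theorem prime_of_retraction [IsDomain R] (hℓ : ℓ ≠ 0) : Prime ℓ := by
  have hker : RingHom.ker ε = span {ℓ} := by
    ext f
    refine ⟨fun hf => mem_span_singleton.mpr (by simpa [RingHom.mem_ker.mp hf] using hε f), ?_⟩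
    rintro hf
    obtain ⟨g, rfl⟩ := mem_span_singleton'.mp hf
    simp [RingHom.mem_ker, hεℓ]
  exact (span_singleton_prime hℓ).mp (hker ▸ RingHom.ker_isPrime ε)

theorem isRelPrime_of_retraction [IsDomain R] (hℓ : ℓ ≠ 0) {y : R} (hy : ε y ≠ 0) :
    IsRelPrime ℓ y :=
  (prime_of_retraction hεℓ hε hℓ).irreducible.isRelPrime_iff_not_dvd.mpr fun ⟨z, hz⟩ =>
    hy (by rw [hz, map_mul, hεℓ, zero_mul])

theorem isSMulRegular_quotient_sup_span_singleton_of_retraction {𝔞 : Ideal R} {u : R}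
    (h𝔞 : 𝔞.map ε ≤ 𝔞) (hℓ : IsSMulRegular (R ⧸ 𝔞) ℓ) (hu : IsSMulRegular (R ⧸ 𝔞) (ε u)) :
    IsSMulRegular (R ⧸ (𝔞 ⊔ span {u})) ℓ := by
  refine (isSMulRegular_quotient_iff_mem_of_smul_mem _ _).mpr fun x hℓx => ?_
  obtain ⟨a, ha, _, hα, hx⟩ := Submodule.mem_sup.mp hℓx
  obtain ⟨α, rfl⟩ := mem_span_singleton'.mp hα
  have hεa : ε a ∈ 𝔞 := h𝔞 (mem_map_of_mem ε ha)
  -- applying `ε` kills `ℓ * x`, leaving `ε u * ε α ∈ 𝔞`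
  have hεα : ε α ∈ 𝔞 := mem_of_isSMulRegular_quotient_of_smul_mem hu <| by
    have := congrArg ε hx
    rw [smul_eq_mul, map_mul, hεℓ, zero_mul, map_add, map_mul] at this
    rw [smul_eq_mul, mul_comm, show ε α * ε u = -ε a by linear_combination this]
    exact neg_mem hεa
  obtain ⟨v, hv⟩ := hε α
  have hxv : x - v * u ∈ 𝔞 := mem_of_isSMulRegular_quotient_of_smul_mem hℓ <| by
    rw [show ℓ • (x - v * u) = a + ε α * u by
      rw [smul_eq_mul] at hx ⊢; linear_combination -hx + u * hv]
    exact add_mem ha (mul_mem_right _ _ hεα)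
  rw [show x = (x - v * u) + v * u by ring]
  exact add_mem (mem_sup_left hxv) (mem_sup_right (mul_mem_left _ _ (mem_span_singleton_self u)))

theorem isSMulRegular_quotient_span_pair_of_retraction [DecompositionMonoid R] {w u : R}
    (hw : ε w = w) (hwℓ : IsRelPrime w ℓ) (hwu : IsRelPrime w (ε u)) :
    IsSMulRegular (R ⧸ span {w, u}) ℓ := by
  rw [span_insert]
  refine isSMulRegular_quotient_sup_span_singleton_of_retraction hεℓ hε ?_
    (isSMulRegular_quotient_span_singleton_of_isRelPrime hwℓ)
    (isSMulRegular_quotient_span_singleton_of_isRelPrime hwu)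
  rw [map_span, Set.image_singleton, hw]

end Retraction

end Ideal

namespace MvPolynomial

variable {σ R k ι : Type*}

theorem prod_mem_supported_of_mem_span [CommSemiring k] {u : Set σ} {C : Finset ι}
    {F : ι → MvPolynomial σ k} (hF : ∀ i ∈ C, F i ∈ Submodule.span k (X '' u)) :
    ∏ i ∈ C, F i ∈ supported k u :=
  Subalgebra.prod_mem _ fun i hi => Algebra.span_le_adjoin k _ (hF i hi)

variable [DecidableEq σ]

theorem X_sub_dvd_sub_aeval_update [CommRing R] (b : σ) (g f : MvPolynomial σ R) :
    X b - g ∣ f - aeval (Function.update X b g) f := by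
  rw [← Ideal.mem_span_singleton, ← Ideal.Quotient.eq]
  have hcomp : (Ideal.Quotient.mkₐ R (Ideal.span {X b - g})).comp (aeval (Function.update X b g))
      = Ideal.Quotient.mkₐ R _ := by
    refine algHom_ext fun j => ?_
    rcases eq_or_ne j b with rfl | hj
    · simp only [AlgHom.comp_apply, aeval_X, Function.update_self, Ideal.Quotient.mkₐ_eq_mk]
      exact Ideal.Quotient.eq.mpr (Ideal.mem_span_singleton.mpr ⟨-1, by ring⟩)
    · simp [hj]
  exact (DFunLike.congr_fun hcomp f).symm

variable [Field k]

theorem aeval_update_X_sub_of_mem_span (b : σ) (g : MvPolynomial σ k) {s : Set σ}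
    {y : MvPolynomial σ k} (hy : y ∈ Submodule.span k (X '' s)) :
    aeval (Function.update X b (X b - g)) y = y - coeff (Finsupp.single b 1) y • g := by
  induction hy using Submodule.span_induction with
  | mem _ hx =>
    obtain ⟨j, -, rfl⟩ := hx
    rcases eq_or_ne j b with rfl | hj
    · simp
    · simp [hj, coeff_X, Finsupp.single_eq_single_iff]
  | zero => simp
  | add x y _ _ hx hy => rw [map_add, hx, hy, coeff_add, add_smul]; abel
  | smul r x _ hx => rw [map_smul, hx, coeff_smul, smul_sub, smul_eq_mul, mul_smul]

theorem exists_eq_single_of_mem_span {s : Set σ} {y : MvPolynomial σ k}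
    (hy : y ∈ Submodule.span k (X '' s)) {m : σ →₀ ℕ} (hm : coeff m y ≠ 0) :
    ∃ b ∈ s, m = Finsupp.single b 1 := by
  induction hy using Submodule.span_induction with
  | mem _ hx =>
    obtain ⟨j, hj, rfl⟩ := hx
    rw [coeff_X] at hm
    exact ⟨j, hj, (ite_ne_right_iff.mp hm).1.symm⟩
  | zero => simp at hm
  | add x y _ _ hx hy =>
    rw [coeff_add] at hm
    by_cases hxm : coeff m x = 0
    · exact hy (by simpa [hxm] using hm)
    · exact hx hxm
  | smul r x _ hx => exact hx (right_ne_zero_of_mul (by simpa using hm))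

theorem exists_coeff_X_ne_zero_of_mem_span {s : Set σ} {ℓ : MvPolynomial σ k}
    (hℓ : ℓ ∈ Submodule.span k (X '' s)) (hℓ0 : ℓ ≠ 0) :
    ∃ b ∈ s, coeff (Finsupp.single b 1) ℓ ≠ 0 := by
  obtain ⟨m, hm⟩ := ne_zero_iff.mp hℓ0
  obtain ⟨b, hb, rfl⟩ := exists_eq_single_of_mem_span hℓ hm
  exact ⟨b, hb, hm⟩

/-- For a linear form `ℓ` whose coefficient `c` of `X b` is nonzero, `X b - c⁻¹ • ℓ` is the value
of `X b` on the hyperplane `ℓ = 0`; substituting it for `X b` gives a retraction of `k[X]` with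
kernel `(ℓ)`. -/
noncomputable def elimVar (b : σ) (ℓ : MvPolynomial σ k) :
    MvPolynomial σ k →ₐ[k] MvPolynomial σ k :=
  aeval (Function.update X b (X b - (coeff (Finsupp.single b 1) ℓ)⁻¹ • ℓ))

section elimVar

variable {b : σ} {ℓ : MvPolynomial σ k} {s : Set σ}

theorem elimVar_X_of_ne {j : σ} (hj : j ≠ b) : elimVar b ℓ (X j) = X j := by
  simp [elimVar, hj]

theorem elimVar_eq_self_of_mem_supported {t : Set σ} (hbt : b ∉ t) {y : MvPolynomial σ k}
    (hy : y ∈ supported k t) : elimVar b ℓ y = y := by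
  rw [supported_eq_adjoin_X] at hy
  refine (AlgHom.eqOn_adjoin_iff (ψ := AlgHom.id k _)).mpr ?_ hy
  rintro _ ⟨j, hj, rfl⟩
  exact elimVar_X_of_ne (ne_of_mem_of_not_mem hj hbt)

theorem elimVar_of_mem_span {y : MvPolynomial σ k} (hy : y ∈ Submodule.span k (X '' s)) :
    elimVar b ℓ y = y - (coeff (Finsupp.single b 1) y * (coeff (Finsupp.single b 1) ℓ)⁻¹) • ℓ := by
  rw [elimVar, aeval_update_X_sub_of_mem_span b _ hy, smul_smul]

theorem elimVar_mem_span (hℓ : ℓ ∈ Submodule.span k (X '' s)) {y : MvPolynomial σ k}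
    (hy : y ∈ Submodule.span k (X '' s)) : elimVar b ℓ y ∈ Submodule.span k (X '' s) := by
  rw [elimVar_of_mem_span hy]
  exact sub_mem hy (Submodule.smul_mem _ _ hℓ)

theorem elimVar_ne_zero {y : MvPolynomial σ k} (hy : y ∈ Submodule.span k (X '' s))
    (hind : LinearIndependent k ![ℓ, y]) : elimVar b ℓ y ≠ 0 := by
  rw [elimVar_of_mem_span hy]
  intro h
  have := LinearIndependent.pair_iff.mp hind
    (-(coeff (Finsupp.single b 1) y * (coeff (Finsupp.single b 1) ℓ)⁻¹)) 1
    (by rw [neg_smul, one_smul, neg_add_eq_sub, h])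
  exact one_ne_zero this.2

theorem dvd_sub_elimVar (f : MvPolynomial σ k) : ℓ ∣ f - elimVar b ℓ f := by
  have h := X_sub_dvd_sub_aeval_update b (X b - (coeff (Finsupp.single b 1) ℓ)⁻¹ • ℓ) f
  rw [sub_sub_cancel] at h
  exact (smul_eq_C_mul ℓ _ ▸ dvd_mul_left ℓ _).trans h

theorem elimVar_self (hb : coeff (Finsupp.single b 1) ℓ ≠ 0) (hℓ : ℓ ∈ Submodule.span k (X '' s)) :
    elimVar b ℓ ℓ = 0 := by
  rw [elimVar_of_mem_span hℓ, mul_inv_cancel₀ hb, one_smul, sub_self]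

end elimVar

theorem isRelPrime_of_mem_span_of_linearIndependent {s : Set σ} {x y : MvPolynomial σ k}
    (hx : x ∈ Submodule.span k (X '' s)) (hy : y ∈ Submodule.span k (X '' s))
    (hxy : LinearIndependent k ![x, y]) : IsRelPrime x y := by
  have hx0 : x ≠ 0 := by simpa using hxy.ne_zero 0
  obtain ⟨b, -, hb⟩ := exists_coeff_X_ne_zero_of_mem_span hx hx0
  exact Ideal.isRelPrime_of_retraction (ε := (elimVar b x).toRingHom) (elimVar_self hb hx)
    dvd_sub_elimVar hx0 (elimVar_ne_zero hy hxy)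

section Disjoint

variable {s t : Set σ} (hst : Disjoint s t)
include hst

theorem isRelPrime_of_mem_span_of_mem_supported {x y : MvPolynomial σ k}
    (hx : x ∈ Submodule.span k (X '' s)) (hx0 : x ≠ 0) (hy : y ∈ supported k t) (hy0 : y ≠ 0) :
    IsRelPrime x y := by
  obtain ⟨b, hbs, hb⟩ := exists_coeff_X_ne_zero_of_mem_span hx hx0
  refine Ideal.isRelPrime_of_retraction (ε := (elimVar b x).toRingHom) (elimVar_self hb hx)
    dvd_sub_elimVar hx0 ?_
  rwa [AlgHom.toRingHom_eq_coe, RingHom.coe_coe,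
    elimVar_eq_self_of_mem_supported (Set.disjoint_left.mp hst hbs) hy]

theorem isSMulRegular_quotient_span_prod_of_mem_span {ℓ : MvPolynomial σ k}
    (hℓ : ℓ ∈ Submodule.span k (X '' s)) (hℓ0 : ℓ ≠ 0) {A : Finset ι} {H : ι → MvPolynomial σ k}
    (hH : ∀ i ∈ A, H i ∈ Submodule.span k (X '' s)) (hind : ∀ i ∈ A, LinearIndependent k ![ℓ, H i])
    {W : MvPolynomial σ k} (hW : W ∈ supported k t) (hW0 : W ≠ 0) :
    IsSMulRegular (MvPolynomial σ k ⧸ Ideal.span {∏ i ∈ A, H i, W}) ℓ := by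
  obtain ⟨b, hbs, hb⟩ := exists_coeff_X_ne_zero_of_mem_span hℓ hℓ0
  have hWℓ := isRelPrime_of_mem_span_of_mem_supported hst hℓ hℓ0 hW hW0
  rw [Set.pair_comm]
  refine Ideal.isSMulRegular_quotient_span_pair_of_retraction (ε := (elimVar b ℓ).toRingHom)
    (elimVar_self hb hℓ) dvd_sub_elimVar
    (elimVar_eq_self_of_mem_supported (Set.disjoint_left.mp hst hbs) hW) hWℓ.symm ?_
  rw [AlgHom.toRingHom_eq_coe, RingHom.coe_coe, map_prod]
  exact IsRelPrime.prod_right fun i hi => (isRelPrime_of_mem_span_of_mem_supported hst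
    (elimVar_mem_span hℓ (hH i hi)) (elimVar_ne_zero (hH i hi) (hind i hi)) hW hW0).symm

variable {P₁ P₂ : MvPolynomial σ k} (hP₁ : P₁ ∈ supported k s) (hP₂ : P₂ ∈ supported k s)
  (hP₁0 : P₁ ≠ 0) (hP : IsRelPrime P₁ P₂)
include hP₁ hP₂ hP₁0 hP

theorem isSMulRegular_quotient_span_pair_of_mem_span {y : MvPolynomial σ k}
    (hy : y ∈ Submodule.span k (X '' t)) (hy0 : y ≠ 0) :
    IsSMulRegular (MvPolynomial σ k ⧸ Ideal.span {P₁, P₂}) y := by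
  obtain ⟨b, hbt, hb⟩ := exists_coeff_X_ne_zero_of_mem_span hy hy0
  have hbs : b ∉ s := Set.disjoint_right.mp hst hbt
  refine Ideal.isSMulRegular_quotient_span_pair_of_retraction (ε := (elimVar b y).toRingHom)
    (elimVar_self hb hy) dvd_sub_elimVar (elimVar_eq_self_of_mem_supported hbs hP₁)
    (isRelPrime_of_mem_span_of_mem_supported hst.symm hy hy0 hP₁ hP₁0).symm ?_
  rwa [AlgHom.toRingHom_eq_coe, RingHom.coe_coe, elimVar_eq_self_of_mem_supported hbs hP₂]

theorem isSMulRegular_quotient_span_pair_sup_span_prod {y : MvPolynomial σ k}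
    (hy : y ∈ Submodule.span k (X '' t)) (hy0 : y ≠ 0) {B : Finset ι} {V : ι → MvPolynomial σ k}
    (hV : ∀ i ∈ B, V i ∈ Submodule.span k (X '' t))
    (hind : ∀ i ∈ B, LinearIndependent k ![y, V i]) :
    IsSMulRegular (MvPolynomial σ k ⧸ (Ideal.span {P₁, P₂} ⊔ Ideal.span {∏ i ∈ B, V i})) y := by
  obtain ⟨b, hbt, hb⟩ := exists_coeff_X_ne_zero_of_mem_span hy hy0
  have hbs : b ∉ s := Set.disjoint_right.mp hst hbt
  refine Ideal.isSMulRegular_quotient_sup_span_singleton_of_retraction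
    (ε := (elimVar b y).toRingHom) (elimVar_self hb hy) dvd_sub_elimVar ?_
    (isSMulRegular_quotient_span_pair_of_mem_span hst hP₁ hP₂ hP₁0 hP hy hy0) ?_
  · rw [Ideal.map_span, Set.image_pair, AlgHom.toRingHom_eq_coe, RingHom.coe_coe,
      elimVar_eq_self_of_mem_supported hbs hP₁, elimVar_eq_self_of_mem_supported hbs hP₂]
  · rw [AlgHom.toRingHom_eq_coe, RingHom.coe_coe, map_prod]
    exact IsSMulRegular.finset_prod fun i hi => isSMulRegular_quotient_span_pair_of_mem_span hst
      hP₁ hP₂ hP₁0 hP (elimVar_mem_span hy (hV i hi)) (elimVar_ne_zero (hV i hi) (hind i hi))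

end Disjoint

theorem span_pair_pow_inf_span_pair_pow_of_mem_span {κ : Type*} {s t : Set σ}
    (hst : Disjoint s t) {A₁ A₂ : Finset ι} {B₁ B₂ : Finset κ}
    {H : ι → MvPolynomial σ k} {V : κ → MvPolynomial σ k}
    (hH₁ : ∀ i ∈ A₁, H i ∈ Submodule.span k (X '' s) ∧ H i ≠ 0)
    (hH₂ : ∀ i ∈ A₂, H i ∈ Submodule.span k (X '' s) ∧ H i ≠ 0)
    (hV₁ : ∀ j ∈ B₁, V j ∈ Submodule.span k (X '' t) ∧ V j ≠ 0)
    (hV₂ : ∀ j ∈ B₂, V j ∈ Submodule.span k (X '' t) ∧ V j ≠ 0)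
    (hHind : ∀ i ∈ A₁, ∀ i' ∈ A₂, LinearIndependent k ![H i, H i'])
    (hVind : ∀ j ∈ B₂, ∀ j' ∈ B₁, LinearIndependent k ![V j, V j']) (m n : ℕ) :
    Ideal.span {∏ i ∈ A₁, H i, ∏ j ∈ B₂, V j} ^ m ⊓ Ideal.span {∏ i ∈ A₂, H i, ∏ j ∈ B₁, V j} ^ n
      = Ideal.span {∏ i ∈ A₁, H i, ∏ j ∈ B₂, V j} ^ m
        * Ideal.span {∏ i ∈ A₂, H i, ∏ j ∈ B₁, V j} ^ n := by
  have hQ₁ := prod_mem_supported_of_mem_span fun i hi => (hH₁ i hi).1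
  have hQ₂ := prod_mem_supported_of_mem_span fun i hi => (hH₂ i hi).1
  have hU₁ := prod_mem_supported_of_mem_span fun j hj => (hV₁ j hj).1
  have hU₂ := prod_mem_supported_of_mem_span fun j hj => (hV₂ j hj).1
  have hQ₁0 : ∏ i ∈ A₁, H i ≠ 0 := Finset.prod_ne_zero_iff.mpr fun i hi => (hH₁ i hi).2
  have hQ₂0 : ∏ i ∈ A₂, H i ≠ 0 := Finset.prod_ne_zero_iff.mpr fun i hi => (hH₂ i hi).2
  have hU₁0 : ∏ j ∈ B₁, V j ≠ 0 := Finset.prod_ne_zero_iff.mpr fun j hj => (hV₁ j hj).2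
  have hU₂0 : ∏ j ∈ B₂, V j ≠ 0 := Finset.prod_ne_zero_iff.mpr fun j hj => (hV₂ j hj).2
  have hQ₁Q₂ : IsRelPrime (∏ i ∈ A₁, H i) (∏ i ∈ A₂, H i) :=
    .prod_left fun i hi => .prod_right fun i' hi' =>
      isRelPrime_of_mem_span_of_linearIndependent (hH₁ i hi).1 (hH₂ i' hi').1 (hHind i hi i' hi')
  have hQ₁U₂ : IsRelPrime (∏ i ∈ A₁, H i) (∏ j ∈ B₂, V j) := .prod_left fun i hi =>
    isRelPrime_of_mem_span_of_mem_supported hst (hH₁ i hi).1 (hH₁ i hi).2 hU₂ hU₂0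
  have hQ₂U₁ : IsRelPrime (∏ i ∈ A₂, H i) (∏ j ∈ B₁, V j) := .prod_left fun i hi =>
    isRelPrime_of_mem_span_of_mem_supported hst (hH₂ i hi).1 (hH₂ i hi).2 hU₁ hU₁0
  have hQ₁reg := IsSMulRegular.finset_prod fun i hi =>
    isSMulRegular_quotient_span_prod_of_mem_span hst (hH₁ i hi).1 (hH₁ i hi).2
      (fun i' hi' => (hH₂ i' hi').1) (hHind i hi) hU₁ hU₁0
  have hU₂reg := IsSMulRegular.finset_prod fun j hj =>
    isSMulRegular_quotient_span_pair_sup_span_prod hst hQ₁ hQ₂ hQ₁0 hQ₁Q₂ (hV₂ j hj).1 (hV₂ j hj).2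
      (fun j' hj' => (hV₁ j' hj').1) (hVind j hj)
  rw [show Ideal.span {∏ i ∈ A₁, H i, ∏ i ∈ A₂, H i} ⊔ Ideal.span {∏ j ∈ B₁, V j}
      = Ideal.span {∏ i ∈ A₂, H i, ∏ j ∈ B₁, V j} ⊔ Ideal.span {∏ i ∈ A₁, H i} by
    simp only [Ideal.span_insert]; ac_rfl] at hU₂reg
  exact Ideal.span_pair_pow_inf_span_pair_pow hQ₁0 hQ₁U₂ hQ₂0 hQ₂U₁
    (Ideal.span_pair_inf_le_mul hQ₁reg hU₂reg) m n

end MvPolynomial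

/-- Lemma 3.3 (generator description, degrees from `D_0`): the defining ideal of a set
of fat points supported on the disjoint union of two fat complete intersections. -/
theorem two_disjoint_fat_CI_generators
    {k : Type*} [Field k]
    (α1 α2 β1 β2 : ℕ) (hα1 : 0 < α1) (hα2 : 0 < α2) (hβ1 : 0 < β1) (hβ2 : 0 < β2)
    (H V : ℕ → MvPolynomial (Fin 4) k)
    (hH : ∀ i < α1 + α2, H i ∈ Submodule.span k ({X 0, X 1} : Set (MvPolynomial (Fin 4) k)))
    (hV : ∀ j < β1 + β2, V j ∈ Submodule.span k ({X 2, X 3} : Set (MvPolynomial (Fin 4) k)))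
    (hHind : ∀ i < α1 + α2, ∀ j < α1 + α2, i ≠ j → LinearIndependent k ![H i, H j])
    (hVind : ∀ i < β1 + β2, ∀ j < β1 + β2, i ≠ j → LinearIndependent k ![V i, V j])
    (Q1 Q2 U1 U2 : MvPolynomial (Fin 4) k)
    (hQ1 : Q1 = ∏ i ∈ Finset.range α1, H i)
    (hQ2 : Q2 = ∏ i ∈ Finset.Ico α1 (α1 + α2), H i)
    (hU1 : U1 = ∏ j ∈ Finset.range β1, V j)
    (hU2 : U2 = ∏ j ∈ Finset.Ico β1 (β1 + β2), V j)
    (m12 m21 : ℕ) :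
    Ideal.span {Q1, U2} ^ m12 ⊓ Ideal.span {Q2, U1} ^ m21 =
      Ideal.span { f : MvPolynomial (Fin 4) k |
        ∃ a b c d : ℕ, a + d = m12 ∧ b + c = m21 ∧
          f = Q1 ^ a * Q2 ^ b * U1 ^ c * U2 ^ d } := by
  subst hQ1 hQ2 hU1 hU2
  have hst : Disjoint ({0, 1} : Set (Fin 4)) {2, 3} := by simp [Set.disjoint_left]
  have hH' : ∀ i < α1 + α2, H i ∈ Submodule.span k (X '' {0, 1}) ∧ H i ≠ 0 := fun i hi =>
    ⟨by rw [Set.image_pair]; exact hH i hi, ne_zero_of_linearIndependent_pair (by omega) hHind hi⟩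
  have hV' : ∀ j < β1 + β2, V j ∈ Submodule.span k (X '' {2, 3}) ∧ V j ≠ 0 := fun j hj =>
    ⟨by rw [Set.image_pair]; exact hV j hj, ne_zero_of_linearIndependent_pair (by omega) hVind hj⟩
  rw [span_pair_pow_inf_span_pair_pow_of_mem_span hst
      (fun i hi => hH' i (by simp at hi; omega)) (fun i hi => hH' i (by simp at hi; omega))
      (fun j hj => hV' j (by simp at hj; omega)) (fun j hj => hV' j (by simp at hj; omega))
      (fun i hi i' hi' => hHind i (by simp at hi; omega) i' (by simp at hi'; omega)
        (by simp at hi hi'; omega))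
      (fun j hj j' hj' => hVind j (by simp at hj; omega) j' (by simp at hj'; omega)
        (by simp at hj hj'; omega)),
    Ideal.span_pair_pow_mul_span_pair_pow]
end

section
/- The ideal (Q,U1)^{m11} ∩ (Q,U2)^{m12} equals the ideal generated by the finite set { Q^{t} U1^{(m11−t)_+} U2^{(m12−t)_+} : 0 ≤ t ≤ max(m11, m12) }. (This is the generator description, in degrees coming from the module F_0 of Lemma 2.2, of the defining ideal of an ACM set of fat points supported on a complete intersection.) -/
open MvPolynomial


section Generic
variable {R : Type*} [CommRing R] [IsDomain R]

lemma span_pair_pow (a b : R) (n : ℕ) :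
    Ideal.span {a, b} ^ n =
      Ideal.span ((fun i => a ^ i * b ^ (n - i)) '' Set.Iic n) := by
  induction n with
  | zero =>
      rw [pow_zero, Ideal.one_eq_top]
      have : (fun i => a ^ i * b ^ (0 - i)) '' Set.Iic 0 = {1} := by
        ext x
        simp only [Set.mem_image, Set.mem_Iic, Nat.le_zero, Set.mem_singleton_iff]
        constructor
        · rintro ⟨i, rfl, rfl⟩; simp
        · rintro rfl; exact ⟨0, rfl, by simp⟩
      rw [this, Ideal.span_singleton_one]
  | succ n ih =>
      rw [pow_succ, ih, Ideal.span_mul_span']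
      apply le_antisymm
      · rw [Ideal.span_le]
        rintro x ⟨y, ⟨i, hi, rfl⟩, z, (rfl | rfl), rfl⟩ <;> simp only [Set.mem_Iic] at hi
        · refine Ideal.subset_span ⟨i + 1, Set.mem_Iic.mpr (by omega), ?_⟩
          beta_reduce
          rw [Nat.succ_sub_succ]; ring
        · refine Ideal.subset_span ⟨i, Set.mem_Iic.mpr (by omega), ?_⟩
          beta_reduce
          have h2 : n + 1 - i = (n - i) + 1 := by omega
          rw [h2]; ring
      · rw [Ideal.span_le]
        rintro x ⟨i, hi, rfl⟩
        simp only [Set.mem_Iic] at hi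
        show a ^ i * b ^ (n + 1 - i) ∈ _
        rcases Nat.eq_zero_or_pos i with rfl | hpos
        · have he : a ^ 0 * b ^ (n + 1 - 0) = (a ^ 0 * b ^ (n - 0)) * b := by
            simp [pow_succ]
          rw [he]
          exact Ideal.subset_span
            (Set.mul_mem_mul ⟨0, Set.mem_Iic.mpr (Nat.zero_le n), rfl⟩ (by simp))
        · obtain ⟨j, rfl⟩ : ∃ j, i = j + 1 := ⟨i - 1, by omega⟩
          have he : a ^ (j + 1) * b ^ (n + 1 - (j + 1)) = (a ^ j * b ^ (n - j)) * a := by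
            rw [Nat.succ_sub_succ]; ring
          rw [he]
          exact Ideal.subset_span
            (Set.mul_mem_mul ⟨j, Set.mem_Iic.mpr (by omega), rfl⟩ (by simp))

lemma mem_pow_decomp {a b f : R} {n : ℕ} (hn : 0 < n) (hf : f ∈ Ideal.span {a, b} ^ n) :
    ∃ c h, h ∈ Ideal.span {a, b} ^ (n - 1) ∧ f = c * b ^ n + a * h := by
  obtain ⟨n, rfl⟩ : ∃ m, n = m + 1 := ⟨n - 1, by omega⟩
  rw [span_pair_pow] at hf
  have himg : (fun i => a ^ i * b ^ (n + 1 - i)) '' Set.Iic (n + 1)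
      = insert (b ^ (n + 1)) ((fun i => a ^ i * b ^ (n + 1 - i)) '' Set.Icc 1 (n + 1)) := by
    have : Set.Iic (n + 1) = insert 0 (Set.Icc 1 (n + 1)) := by
      ext x; simp [Set.mem_Iic, Set.mem_Icc]; omega
    rw [this, Set.image_insert_eq]
    simp
  rw [himg, Ideal.mem_span_insert] at hf
  obtain ⟨c, z, hz, rfl⟩ := hf
  have hzmem : z ∈ Ideal.span {a} * Ideal.span {a, b} ^ n := by
    refine Ideal.span_le.mpr ?_ hz
    rintro x ⟨i, hi, rfl⟩
    simp only [Set.mem_Icc] at hi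
    obtain ⟨j, rfl⟩ : ∃ j, i = j + 1 := ⟨i - 1, by omega⟩
    show a ^ (j + 1) * b ^ (n + 1 - (j + 1)) ∈ _
    have he : a ^ (j + 1) * b ^ (n + 1 - (j + 1)) = a * (a ^ j * b ^ (n - j)) := by
      rw [Nat.succ_sub_succ]; ring
    rw [he]
    refine Ideal.mul_mem_mul (Ideal.mem_span_singleton_self a) ?_
    rw [span_pair_pow]
    exact Ideal.subset_span ⟨j, Set.mem_Iic.mpr (by omega), rfl⟩
  rw [Ideal.mem_span_singleton_mul] at hzmem
  obtain ⟨h, hh, rfl⟩ := hzmem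
  exact ⟨c, h, by simpa using hh, by ring⟩

/-- "P is regular relative to y": any multiple of y divisible by P has its cofactor divisible. -/
def RelDvd (P y : R) : Prop := ∀ x, P ∣ x * y → P ∣ x

lemma relDvd_one (y : R) : RelDvd (1 : R) y := fun x _ => one_dvd x

lemma Prime.relDvd {p y : R} (hp : Prime p) (h : ¬ p ∣ y) : RelDvd p y :=
  fun _ hx => (hp.dvd_or_dvd hx).resolve_right h

lemma RelDvd.mul {P P' y : R} (hP : P ≠ 0) (h1 : RelDvd P y) (h2 : RelDvd P' y) :
    RelDvd (P * P') y := by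
  intro x hx
  obtain ⟨x', rfl⟩ := h1 x (dvd_trans (dvd_mul_right P P') hx)
  have h3 : P * P' ∣ P * (x' * y) := by rwa [← mul_assoc]
  exact mul_dvd_mul_left P (h2 x' ((mul_dvd_mul_iff_left hP).mp h3))

lemma RelDvd.pow {P y : R} (hP : P ≠ 0) (h : RelDvd P y) (n : ℕ) : RelDvd (P ^ n) y := by
  induction n with
  | zero => rw [pow_zero]; exact relDvd_one y
  | succ n ih => rw [pow_succ]; exact ih.mul (pow_ne_zero n hP) h

lemma relDvd_prod {ι : Type*} {s : Finset ι} {f : ι → R} {y : R}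
    (h : ∀ i ∈ s, f i ≠ 0 ∧ RelDvd (f i) y) : (∏ i ∈ s, f i) ≠ 0 ∧ RelDvd (∏ i ∈ s, f i) y :=
  Finset.prod_induction f (fun P => P ≠ 0 ∧ RelDvd P y)
    (fun a b ha hb => ⟨mul_ne_zero ha.1 hb.1, ha.2.mul ha.1 hb.2⟩)
    ⟨one_ne_zero, relDvd_one y⟩ h

lemma RelDvd.pow_right {P W : R} (h : RelDvd P W) (n : ℕ) : RelDvd P (W ^ n) := by
  induction n with
  | zero => intro x hx; simpa using hx
  | succ n ih =>
      intro x hx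
      rw [pow_succ, ← mul_assoc] at hx
      exact ih x (h _ hx)

lemma colon_step {Q W : R} (hQ0 : Q ≠ 0) (hW : RelDvd Q W) {g : R} {n : ℕ}
    (hg : Q * g ∈ Ideal.span {Q, W} ^ n) : g ∈ Ideal.span {Q, W} ^ (n - 1) := by
  rcases Nat.eq_zero_or_pos n with rfl | hn
  · simp [Ideal.one_eq_top]
  · obtain ⟨c, h, hh, heq⟩ := mem_pow_decomp hn hg
    have hdvd : Q ∣ c * W ^ n := ⟨g - h, by linear_combination -heq⟩
    obtain ⟨c', rfl⟩ := hW.pow_right n c hdvd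
    have : g = h + c' * W ^ n := by
      apply mul_left_cancel₀ hQ0
      rw [mul_add]; linear_combination heq
    rw [this]
    refine Submodule.add_mem _ hh ?_
    obtain ⟨m, rfl⟩ : ∃ m, n = m + 1 := ⟨n - 1, by omega⟩
    simp only [Nat.add_sub_cancel]
    have : c' * W ^ (m + 1) = (c' * W) * W ^ m := by ring
    rw [this]
    exact Ideal.mul_mem_left _ _ (Ideal.pow_mem_pow (Ideal.subset_span (by simp)) m)

end Generic
section Abstract
variable {R : Type*} [CommRing R] [IsDomain R]

lemma abstract_le (Q U1 U2 : R) (hQ0 : Q ≠ 0)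
    (hW1 : RelDvd Q U1) (hW2 : RelDvd Q U2)
    (hP3 : ∀ (m n : ℕ) (a b : R), Q ∣ b * U2 ^ n - a * U1 ^ m →
        ∃ d e, b = d * U1 ^ m + e * Q)
    (m n : ℕ) :
    Ideal.span {Q, U1} ^ m ⊓ Ideal.span {Q, U2} ^ n ≤
      Ideal.span {f : R | ∃ t : ℕ, t ≤ max m n ∧ f = Q ^ t * U1 ^ (m - t) * U2 ^ (n - t)} := by
  induction m generalizing n with
  | zero =>
      rw [pow_zero, Ideal.one_eq_top, top_inf_eq, span_pair_pow]
      rw [Ideal.span_le]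
      rintro x ⟨i, hi, rfl⟩
      simp only [Set.mem_Iic] at hi
      refine Ideal.subset_span ⟨i, by omega, ?_⟩
      beta_reduce
      simp [Nat.zero_sub]
  | succ m ih =>
      cases n with
      | zero =>
          rw [pow_zero, Ideal.one_eq_top, inf_top_eq, span_pair_pow, Ideal.span_le]
          rintro x ⟨i, hi, rfl⟩
          simp only [Set.mem_Iic] at hi
          refine Ideal.subset_span ⟨i, by omega, ?_⟩
          beta_reduce
          simp [Nat.zero_sub]
      | succ n =>
          rintro f ⟨hf1, hf2⟩
          obtain ⟨a0, h, hh, hfeq1⟩ := mem_pow_decomp (n := m + 1) (by omega) hf1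
          obtain ⟨b0, g, hg, hfeq2⟩ := mem_pow_decomp (n := n + 1) (by omega) hf2
          have hdvd : Q ∣ b0 * U2 ^ (n + 1) - a0 * U1 ^ (m + 1) :=
            ⟨h - g, by rw [mul_sub]; linear_combination hfeq1 - hfeq2⟩
          obtain ⟨d, e, hb0⟩ := hP3 (m + 1) (n + 1) a0 b0 hdvd
          set g' := e * U2 ^ (n + 1) + g with hg'def
          have hfg : f = d * (U1 ^ (m + 1) * U2 ^ (n + 1)) + Q * g' := by
            rw [hfeq2, hb0, hg'def]; ring
          have hU1mem : U1 ^ (m + 1) ∈ Ideal.span {Q, U1} ^ (m + 1) :=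
            Ideal.pow_mem_pow (Ideal.subset_span (by simp)) _
          have hU2mem : U2 ^ (n + 1) ∈ Ideal.span {Q, U2} ^ (n + 1) :=
            Ideal.pow_mem_pow (Ideal.subset_span (by simp)) _
          have hQg1 : Q * g' ∈ Ideal.span {Q, U1} ^ (m + 1) := by
            have he : Q * g' = f - d * (U1 ^ (m + 1) * U2 ^ (n + 1)) := by rw [hfg]; ring
            rw [he]
            exact Submodule.sub_mem _ hf1
              (Ideal.mul_mem_left _ _ (Ideal.mul_mem_right _ _ hU1mem))
          have hQg2 : Q * g' ∈ Ideal.span {Q, U2} ^ (n + 1) := by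
            have he : Q * g' = f - d * (U1 ^ (m + 1) * U2 ^ (n + 1)) := by rw [hfg]; ring
            rw [he]
            refine Submodule.sub_mem _ hf2 ?_
            have : d * (U1 ^ (m + 1) * U2 ^ (n + 1)) = (d * U1 ^ (m + 1)) * U2 ^ (n + 1) := by
              ring
            rw [this]
            exact Ideal.mul_mem_left _ _ hU2mem
          have h1 : g' ∈ Ideal.span {Q, U1} ^ m := by
            simpa using colon_step hQ0 hW1 hQg1
          have h2 : g' ∈ Ideal.span {Q, U2} ^ n := by
            simpa using colon_step hQ0 hW2 hQg2
          have hg'J := ih n ⟨h1, h2⟩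
          have key : ∀ x : R,
              x ∈ Ideal.span {f : R | ∃ t : ℕ, t ≤ max m n ∧
                    f = Q ^ t * U1 ^ (m - t) * U2 ^ (n - t)} →
              Q * x ∈ Ideal.span {f : R | ∃ t : ℕ, t ≤ max (m + 1) (n + 1) ∧
                    f = Q ^ t * U1 ^ (m + 1 - t) * U2 ^ (n + 1 - t)} := by
            intro x hx
            induction hx using Submodule.span_induction with
            | mem y hy =>
                obtain ⟨t, ht, rfl⟩ := hy
                refine Ideal.subset_span ⟨t + 1, by omega, ?_⟩
                rw [Nat.succ_sub_succ, Nat.succ_sub_succ]; ring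
            | zero => simp
            | add y z hy hz hy' hz' => rw [mul_add]; exact Submodule.add_mem _ hy' hz'
            | smul c y hy hy' =>
                rw [smul_eq_mul, mul_left_comm]
                exact Ideal.mul_mem_left _ _ hy'
          rw [hfg]
          exact Submodule.add_mem _
            (Ideal.mul_mem_left _ d (Ideal.subset_span ⟨0, Nat.zero_le _, by simp⟩))
            (key g' hg'J)

theorem abstract_inter (Q U1 U2 : R) (hQ0 : Q ≠ 0)
    (hW1 : RelDvd Q U1) (hW2 : RelDvd Q U2)
    (hP3 : ∀ (m n : ℕ) (a b : R), Q ∣ b * U2 ^ n - a * U1 ^ m →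
        ∃ d e, b = d * U1 ^ m + e * Q)
    (m n : ℕ) :
    Ideal.span {Q, U1} ^ m ⊓ Ideal.span {Q, U2} ^ n =
      Ideal.span {f : R | ∃ t : ℕ, t ≤ max m n ∧ f = Q ^ t * U1 ^ (m - t) * U2 ^ (n - t)} := by
  refine le_antisymm (abstract_le Q U1 U2 hQ0 hW1 hW2 hP3 m n) ?_
  rw [Ideal.span_le]
  rintro x ⟨t, ht, rfl⟩
  have hQmem1 : Q ∈ Ideal.span ({Q, U1} : Set R) := Ideal.subset_span (by simp)
  have hU1mem : U1 ∈ Ideal.span ({Q, U1} : Set R) := Ideal.subset_span (by simp)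
  have hQmem2 : Q ∈ Ideal.span ({Q, U2} : Set R) := Ideal.subset_span (by simp)
  have hU2mem : U2 ∈ Ideal.span ({Q, U2} : Set R) := Ideal.subset_span (by simp)
  constructor
  · have h1 : Q ^ t * U1 ^ (m - t) ∈ Ideal.span {Q, U1} ^ (t + (m - t)) := by
      rw [pow_add]
      exact Ideal.mul_mem_mul (Ideal.pow_mem_pow hQmem1 t) (Ideal.pow_mem_pow hU1mem (m - t))
    exact Ideal.mul_mem_right _ _ (Ideal.pow_le_pow_right (by omega) h1)
  · have h2 : Q ^ t * U2 ^ (n - t) ∈ Ideal.span {Q, U2} ^ (t + (n - t)) := by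
      rw [pow_add]
      exact Ideal.mul_mem_mul (Ideal.pow_mem_pow hQmem2 t) (Ideal.pow_mem_pow hU2mem (n - t))
    have he : Q ^ t * U1 ^ (m - t) * U2 ^ (n - t) = Q ^ t * U2 ^ (n - t) * U1 ^ (m - t) := by
      ring
    rw [he]
    exact Ideal.mul_mem_right _ _ (Ideal.pow_le_pow_right (by omega) h2)

end Abstract
section Concrete
open MvPolynomial
variable {k : Type*} [Field k]

local notation "R4" => MvPolynomial (Fin 4) k

lemma dvd_sub_of_aeval (h : R4) (φ : R4 →ₐ[k] R4)
    (hX : ∀ l, h ∣ X l - φ (X l)) (g : R4) : h ∣ g - φ g := by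
  induction g using MvPolynomial.induction_on with
  | C a =>
      rw [show ((C a : R4)) = algebraMap k R4 a from rfl, AlgHom.commutes, sub_self]
      exact dvd_zero h
  | add p q hp hq =>
      rw [map_add, show p + q - (φ p + φ q) = (p - φ p) + (q - φ q) by ring]
      exact dvd_add hp hq
  | mul_X p i hp =>
      rw [map_mul, show p * X i - φ p * φ (X i)
            = (p - φ p) * X i + φ p * (X i - φ (X i)) by ring]
      exact dvd_add (hp.mul_right _) ((hX i).mul_left _)

lemma exists_phi_aux {i j : Fin 4} (hij : i ≠ j) (a b : k) (hb : b ≠ 0) :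
    ∃ φ : R4 →ₐ[k] R4,
      (∀ g, (a • X i + b • X j : R4) ∣ g ↔ φ g = 0) ∧
      (∀ l, l ≠ j → φ (X l) = X l) ∧
      (∀ g, (a • X i + b • X j : R4) ∣ g - φ g) ∧
      (∀ g ∈ Submodule.span k ({X i, X j} : Set R4), φ g = 0 →
        ∃ c : k, g = c • (a • X i + b • X j : R4)) := by
  set h : R4 := a • X i + b • X j with hdef
  set φ : R4 →ₐ[k] R4 :=
    MvPolynomial.aeval (fun l => if l = j then C (-(a / b)) * X i else X l) with hφ
  have hXl : ∀ l : Fin 4, l ≠ j → φ (X l) = X l := by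
    intro l hl
    rw [hφ, aeval_X]
    simp [hl]
  have hXj : φ (X j) = C (-(a / b)) * X i := by
    rw [hφ, aeval_X]; simp
  have hsub : ∀ g, h ∣ g - φ g := by
    refine dvd_sub_of_aeval h φ ?_
    intro l
    by_cases hl : l = j
    · rw [hl, hXj]
      refine ⟨C b⁻¹, ?_⟩
      rw [hdef, smul_eq_C_mul, smul_eq_C_mul, map_neg]
      have h1 : (C (a / b) : R4) = C a * C b⁻¹ := by rw [← C_mul, div_eq_mul_inv]
      have h2 : (C b : R4) * C b⁻¹ = 1 := by rw [← C_mul, mul_inv_cancel₀ hb, C_1]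
      calc X j - -(C (a / b)) * X i = C (a / b) * X i + X j := by ring
        _ = C a * C b⁻¹ * X i + (C b * C b⁻¹) * X j := by rw [h1, h2, one_mul]
        _ = (C a * X i + C b * X j) * C b⁻¹ := by ring
    · rw [hXl l hl, sub_self]; exact dvd_zero h
  have hφh : φ h = 0 := by
    rw [hdef, map_add]
    rw [show (a • X i : R4) = C a * X i from smul_eq_C_mul _ a,
        show (b • X j : R4) = C b * X j from smul_eq_C_mul _ b]
    rw [map_mul, map_mul, hXj, hXl i hij]
    rw [show φ (C a) = C a from φ.commutes a, show φ (C b) = C b from φ.commutes b]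
    rw [← mul_assoc, ← C_mul]
    have : b * -(a / b) = -a := by field_simp
    rw [this, map_neg, neg_mul, ← sub_eq_add_neg, sub_self]
  refine ⟨φ, ?_, hXl, hsub, ?_⟩
  · intro g
    constructor
    · rintro ⟨t, rfl⟩
      rw [map_mul, hφh, zero_mul]
    · intro hg
      have := hsub g
      rwa [hg, sub_zero] at this
  · intro g hg hg0
    rw [Submodule.mem_span_pair] at hg
    obtain ⟨c, d, rfl⟩ := hg
    rw [map_add, map_smul, map_smul, hXl i hij, hXj] at hg0
    rw [show (d • (C (-(a / b)) * X i) : R4) = (d * -(a / b)) • X i by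
          rw [smul_eq_C_mul, smul_eq_C_mul, ← mul_assoc, ← C_mul]] at hg0
    rw [← add_smul] at hg0
    have hc : c + d * -(a / b) = 0 := by
      rcases smul_eq_zero.mp hg0 with h' | h'
      · exact h'
      · exact absurd h' (X_ne_zero i)
    refine ⟨d / b, ?_⟩
    rw [hdef, smul_add, smul_smul, smul_smul]
    have h1 : d / b * a = c := by
      field_simp at hc ⊢
      linear_combination -hc
    have h2 : d / b * b = d := by field_simp
    rw [h1, h2]

lemma exists_phi {i j : Fin 4} (hij : i ≠ j) {h : R4}
    (hh : h ∈ Submodule.span k ({X i, X j} : Set R4)) (hh0 : h ≠ 0) :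
    ∃ φ : R4 →ₐ[k] R4,
      (∀ g, h ∣ g ↔ φ g = 0) ∧
      (∀ l, l ≠ i → l ≠ j → φ (X l) = X l) ∧
      (∀ g, h ∣ g - φ g) ∧
      (∀ g ∈ Submodule.span k ({X i, X j} : Set R4), φ g = 0 → ∃ c : k, g = c • h) := by
  rw [Submodule.mem_span_pair] at hh
  obtain ⟨a, b, rfl⟩ := hh
  by_cases hb : b = 0
  · have ha : a ≠ 0 := by
      intro ha
      exact hh0 (by rw [ha, hb, zero_smul, zero_smul, add_zero])
    obtain ⟨φ, h1, h2, h3, h4⟩ := exists_phi_aux hij.symm b a ha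
    have hcomm : (b • X j + a • X i : R4) = a • X i + b • X j := add_comm _ _
    rw [hcomm] at h1 h3 h4
    refine ⟨φ, h1, fun l hli _ => h2 l hli, h3, ?_⟩
    intro g hg hg0
    refine h4 g ?_ hg0
    rwa [Set.pair_comm]
  · obtain ⟨φ, h1, h2, h3, h4⟩ := exists_phi_aux hij a b hb
    exact ⟨φ, h1, fun l _ hlj => h2 l hlj, h3, h4⟩

lemma lin_prime {i j : Fin 4} (hij : i ≠ j) {h : R4}
    (hh : h ∈ Submodule.span k ({X i, X j} : Set R4)) (h0 : h ≠ 0) : Prime h := by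
  obtain ⟨φ, hiff, -, -, -⟩ := exists_phi hij hh h0
  refine ⟨h0, ?_, ?_⟩
  · intro hu
    have := (hiff 1).mp (isUnit_iff_dvd_one.mp hu)
    rw [map_one] at this
    exact one_ne_zero this
  · intro f g hfg
    have := (hiff (f * g)).mp hfg
    rw [map_mul] at this
    rcases mul_eq_zero.mp this with h' | h'
    · exact Or.inl ((hiff f).mpr h')
    · exact Or.inr ((hiff g).mpr h')

lemma phi_fixes {φ : R4 →ₐ[k] R4} {l l' : Fin 4}
    (h1 : φ (X l) = X l) (h2 : φ (X l') = X l')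
    {v : R4} (hv : v ∈ Submodule.span k ({X l, X l'} : Set R4)) : φ v = v := by
  rw [Submodule.mem_span_pair] at hv
  obtain ⟨c, d, rfl⟩ := hv
  rw [map_add, map_smul, map_smul, h1, h2]

lemma cross_not_dvd {i j l l' : Fin 4} (hij : i ≠ j)
    (hli : l ≠ i) (hlj : l ≠ j) (hl'i : l' ≠ i) (hl'j : l' ≠ j)
    {h v : R4} (hh : h ∈ Submodule.span k ({X i, X j} : Set R4)) (h0 : h ≠ 0)
    (hv : v ∈ Submodule.span k ({X l, X l'} : Set R4)) (v0 : v ≠ 0) : ¬ h ∣ v := by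
  obtain ⟨φ, hiff, hfix, -, -⟩ := exists_phi hij hh h0
  intro hd
  have := (hiff v).mp hd
  rw [phi_fixes (hfix l hli hlj) (hfix l' hl'i hl'j) hv] at this
  exact v0 this

lemma pair_not_dvd {i j : Fin 4} (hij : i ≠ j) {v w : R4}
    (hv : v ∈ Submodule.span k ({X i, X j} : Set R4))
    (hw : w ∈ Submodule.span k ({X i, X j} : Set R4))
    (hind : LinearIndependent k ![v, w]) : ¬ v ∣ w := by
  have v0 : v ≠ 0 := by
    have := hind.ne_zero 0
    simpa using this
  obtain ⟨φ, hiff, -, -, hscal⟩ := exists_phi hij hv v0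
  intro hd
  obtain ⟨c, hc⟩ := hscal w hw ((hiff w).mp hd)
  rw [linearIndependent_fin2] at hind
  have hw0 : w ≠ 0 := by simpa using hind.1
  have hc0 : c ≠ 0 := by
    intro h'
    exact hw0 (by rw [hc, h', zero_smul])
  have : c⁻¹ • w = v := by
    rw [hc, smul_smul, inv_mul_cancel₀ hc0, one_smul]
  have h2 := hind.2 c⁻¹
  simp only [Matrix.cons_val_one, Matrix.head_cons, Matrix.cons_val_zero] at h2
  exact h2 this

end Concrete


/-- Lemma 2.2 (generator description, degrees from `F_0`): the defining ideal of an ACM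
set of fat points supported on a complete intersection, i.e.
`(Q,U1)^{m11} ∩ (Q,U2)^{m12} = ( Q^t U1^{(m11-t)_+} U2^{(m12-t)_+} : 0 ≤ t ≤ max(m11,m12) )`.
Here truncated subtraction on `ℕ` realizes `(n)_+`. -/
theorem fat_CI_generators
    {k : Type*} [Field k]
    (α β1 β2 : ℕ) (hα : 0 < α) (hβ1 : 0 < β1) (hβ2 : 0 < β2)
    (H V : ℕ → MvPolynomial (Fin 4) k)
    (hH : ∀ i < α, H i ∈ Submodule.span k ({X 0, X 1} : Set (MvPolynomial (Fin 4) k)))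
    (hV : ∀ j < β1 + β2, V j ∈ Submodule.span k ({X 2, X 3} : Set (MvPolynomial (Fin 4) k)))
    (hHind : ∀ i < α, ∀ j < α, i ≠ j → LinearIndependent k ![H i, H j])
    (hVind : ∀ i < β1 + β2, ∀ j < β1 + β2, i ≠ j → LinearIndependent k ![V i, V j])
    (Q U1 U2 : MvPolynomial (Fin 4) k)
    (hQ : Q = ∏ i ∈ Finset.range α, H i)
    (hU1 : U1 = ∏ j ∈ Finset.range β1, V j)
    (hU2 : U2 = ∏ j ∈ Finset.Ico β1 (β1 + β2), V j)
    (m11 m12 : ℕ) :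
    Ideal.span {Q, U1} ^ m11 ⊓ Ideal.span {Q, U2} ^ m12 =
      Ideal.span { f : MvPolynomial (Fin 4) k |
        ∃ t : ℕ, t ≤ max m11 m12 ∧ f = Q ^ t * U1 ^ (m11 - t) * U2 ^ (m12 - t) } := by

  have h23 : (2 : Fin 4) ≠ 3 := by decide
  have h01 : (0 : Fin 4) ≠ 1 := by decide
  -- every V j is nonzero
  have hVne : ∀ j, j < β1 + β2 → V j ≠ 0 := by
    intro j hj h0
    have hj' : (if j = 0 then 1 else 0) < β1 + β2 := by
      by_cases h : j = 0 <;> simp [h] <;> omega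
    have hne : j ≠ (if j = 0 then 1 else 0) := by
      by_cases h : j = 0 <;> simp [h]
    have := (hVind j hj _ hj' hne).ne_zero 0
    simp [h0] at this
  have hU1ne : U1 ≠ 0 := by
    rw [hU1]
    exact Finset.prod_ne_zero_iff.mpr
      (fun j hj => hVne j (by simp only [Finset.mem_range] at hj; omega))
  have hU2ne : U2 ≠ 0 := by
    rw [hU2]
    exact Finset.prod_ne_zero_iff.mpr
      (fun j hj => hVne j (by simp only [Finset.mem_Ico] at hj; omega))
  have hVprime : ∀ j, j < β1 + β2 → Prime (V j) :=
    fun j hj => lin_prime h23 (hV j hj) (hVne j hj)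
  -- V j (j < β1) does not divide powers of U2, and symmetrically
  have hnd12 : ∀ (n : ℕ) j, j < β1 → ¬ V j ∣ U2 ^ n := by
    intro n j hj hd
    have hjlt : j < β1 + β2 := by omega
    have hp := hVprime j hjlt
    have h1 := hp.dvd_of_dvd_pow hd
    rw [hU2, Prime.dvd_finset_prod_iff hp] at h1
    obtain ⟨j', hj', hdd⟩ := h1
    simp only [Finset.mem_Ico] at hj'
    exact pair_not_dvd h23 (hV j hjlt) (hV j' (by omega))
      (hVind j hjlt j' (by omega) (by omega)) hdd
  have hnd21 : ∀ (m : ℕ) j, β1 ≤ j → j < β1 + β2 → ¬ V j ∣ U1 ^ m := by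
    intro m j hj1 hj2 hd
    have hp := hVprime j hj2
    have h1 := hp.dvd_of_dvd_pow hd
    rw [hU1, Prime.dvd_finset_prod_iff hp] at h1
    obtain ⟨j', hj', hdd⟩ := h1
    simp only [Finset.mem_range] at hj'
    exact pair_not_dvd h23 (hV j hj2) (hV j' (by omega))
      (hVind j hj2 j' (by omega) (by omega)) hdd
  have hrel12 : ∀ n : ℕ, RelDvd U1 (U2 ^ n) := by
    intro n
    rw [hU1]
    refine (relDvd_prod ?_).2
    intro j hj
    simp only [Finset.mem_range] at hj
    exact ⟨hVne j (by omega), (hVprime j (by omega)).relDvd (hnd12 n j hj)⟩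
  have hrel21 : ∀ m : ℕ, RelDvd U2 (U1 ^ m) := by
    intro m
    rw [hU2]
    refine (relDvd_prod ?_).2
    intro j hj
    simp only [Finset.mem_Ico] at hj
    exact ⟨hVne j (by omega), (hVprime j (by omega)).relDvd (hnd21 m j hj.1 hj.2)⟩
  by_cases hQ0 : Q = 0
  · -- degenerate case Q = 0
    rw [hQ0]
    have hsp : ∀ u : MvPolynomial (Fin 4) k,
        Ideal.span {0, u} = Ideal.span {u} := fun u => Submodule.span_insert_zero
    rw [hsp U1, hsp U2, Ideal.span_singleton_pow, Ideal.span_singleton_pow]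
    apply le_antisymm
    · intro x hx
      rw [Submodule.mem_inf] at hx
      obtain ⟨h1, h2⟩ := hx
      rw [Ideal.mem_span_singleton] at h1 h2
      obtain ⟨x1, rfl⟩ := h1
      have hdd : U2 ^ m12 ∣ x1 := by
        refine ((hrel21 m11).pow hU2ne m12) x1 ?_
        rwa [mul_comm] at h2
      obtain ⟨x2, rfl⟩ := hdd
      have he : U1 ^ m11 * (U2 ^ m12 * x2)
          = ((0 : MvPolynomial (Fin 4) k) ^ 0 * U1 ^ (m11 - 0) * U2 ^ (m12 - 0)) * x2 := by
        simp [mul_assoc]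
      rw [he]
      exact Ideal.mul_mem_right _ _ (Ideal.subset_span ⟨0, Nat.zero_le _, rfl⟩)
    · rw [Ideal.span_le]
      rintro x ⟨t, ht, rfl⟩
      rcases Nat.eq_zero_or_pos t with rfl | hpos
      · refine Submodule.mem_inf.mpr ⟨?_, ?_⟩
        · rw [Ideal.mem_span_singleton]
          exact ⟨U2 ^ m12, by simp [mul_assoc]⟩
        · rw [Ideal.mem_span_singleton]
          exact ⟨U1 ^ m11, by simp; ring⟩
      · have : (0 : MvPolynomial (Fin 4) k) ^ t = 0 := zero_pow (by omega)
        rw [this, zero_mul, zero_mul]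
        exact Submodule.zero_mem _
  · -- main case Q ≠ 0
    have hHne : ∀ i, i < α → H i ≠ 0 := by
      intro i hi
      have hq := hQ0
      rw [hQ] at hq
      exact Finset.prod_ne_zero_iff.mp hq i (Finset.mem_range.mpr hi)
    have hHprime : ∀ i, i < α → Prime (H i) :=
      fun i hi => lin_prime h01 (hH i hi) (hHne i hi)
    have hHndV : ∀ i, i < α → ∀ j, j < β1 + β2 → ¬ H i ∣ V j := by
      intro i hi j hj
      exact cross_not_dvd h01 (by decide) (by decide) (by decide) (by decide)
        (hH i hi) (hHne i hi) (hV j hj) (hVne j hj)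
    have hQrel : ∀ W : MvPolynomial (Fin 4) k,
        (W = ∏ j ∈ Finset.range β1, V j ∨ W = ∏ j ∈ Finset.Ico β1 (β1 + β2), V j) →
        RelDvd Q W := by
      intro W hW
      rw [hQ]
      refine (relDvd_prod ?_).2
      intro i hi
      simp only [Finset.mem_range] at hi
      refine ⟨hHne i hi, (hHprime i hi).relDvd ?_⟩
      intro hd
      rcases hW with rfl | rfl
      · rw [Prime.dvd_finset_prod_iff (hHprime i hi)] at hd
        obtain ⟨j, hj, hdd⟩ := hd
        simp only [Finset.mem_range] at hj
        exact hHndV i hi j (by omega) hdd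
      · rw [Prime.dvd_finset_prod_iff (hHprime i hi)] at hd
        obtain ⟨j, hj, hdd⟩ := hd
        simp only [Finset.mem_Ico] at hj
        exact hHndV i hi j (by omega) hdd
    -- the key "P3" property, by induction on the number of factors of Q
    have P3 : ∀ t, t ≤ α → ∀ (m n : ℕ) (a b : MvPolynomial (Fin 4) k),
        (∏ i ∈ Finset.range t, H i) ∣ b * U2 ^ n - a * U1 ^ m →
        ∃ d e, b = d * U1 ^ m + e * ∏ i ∈ Finset.range t, H i := by
      intro t
      induction t with
      | zero => exact fun _ m n a b _ => ⟨0, b, by simp⟩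
      | succ t ih =>
          intro ht m n a b hdvd
          have htα : t < α := ht
          rw [Finset.prod_range_succ] at hdvd
          obtain ⟨φ, hiff, hfix, hsubφ, -⟩ := exists_phi h01 (hH t htα) (hHne t htα)
          have hfixV : ∀ j, j < β1 + β2 → φ (V j) = V j := fun j hj =>
            phi_fixes (hfix 2 (by decide) (by decide)) (hfix 3 (by decide) (by decide)) (hV j hj)
          have hφU1 : φ U1 = U1 := by
            rw [hU1, map_prod]
            exact Finset.prod_congr rfl fun j hj =>
              hfixV j (by simp only [Finset.mem_range] at hj; omega)
          have hφU2 : φ U2 = U2 := by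
            rw [hU2, map_prod]
            exact Finset.prod_congr rfl fun j hj =>
              hfixV j (by simp only [Finset.mem_Ico] at hj; omega)
          have hHt : H t ∣ b * U2 ^ n - a * U1 ^ m :=
            dvd_trans (dvd_mul_left (H t) _) hdvd
          have h0 : φ b * U2 ^ n - φ a * U1 ^ m = 0 := by
            have h' := (hiff _).mp hHt
            rwa [map_sub, map_mul, map_mul, map_pow, map_pow, hφU1, hφU2] at h'
          have hdd : U1 ^ m ∣ φ b * U2 ^ n := ⟨φ a, by linear_combination h0⟩
          obtain ⟨d, hdeq⟩ := ((hrel12 n).pow hU1ne m) (φ b) hdd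
          obtain ⟨e1, he1⟩ := hsubφ b
          have hb : b = d * U1 ^ m + H t * e1 := by linear_combination he1 + hdeq
          have hkey : H t ∣ (d * U2 ^ n - a) * U1 ^ m := by
            have he : (d * U2 ^ n - a) * U1 ^ m
                = (b * U2 ^ n - a * U1 ^ m) - H t * (e1 * U2 ^ n) := by
              linear_combination (-(U2 ^ n)) * hb
            rw [he]
            exact dvd_sub hHt (Dvd.intro _ rfl)
          have hHU1 : ¬ H t ∣ U1 ^ m := by
            intro hd
            have h1 := (hHprime t htα).dvd_of_dvd_pow hd
            rw [hU1, Prime.dvd_finset_prod_iff (hHprime t htα)] at h1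
            obtain ⟨j, hj, hdd'⟩ := h1
            simp only [Finset.mem_range] at hj
            exact hHndV t htα j (by omega) hdd'
          have hca : H t ∣ d * U2 ^ n - a :=
            ((hHprime t htα).dvd_or_dvd hkey).resolve_right hHU1
          obtain ⟨c, hceq⟩ := hca
          have hPz : (∏ i ∈ Finset.range t, H i) ∣ e1 * U2 ^ n - (-c) * U1 ^ m := by
            have h2 : H t * (∏ i ∈ Finset.range t, H i)
                ∣ H t * (e1 * U2 ^ n + c * U1 ^ m) := by
              rw [show H t * (e1 * U2 ^ n + c * U1 ^ m) = b * U2 ^ n - a * U1 ^ m by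
                linear_combination (-(U2 ^ n)) * hb - U1 ^ m * hceq]
              rwa [mul_comm]
            have h3 := (mul_dvd_mul_iff_left (hHne t htα)).mp h2
            rwa [show e1 * U2 ^ n - (-c) * U1 ^ m = e1 * U2 ^ n + c * U1 ^ m by ring]
          obtain ⟨d', e', he'⟩ := ih (le_of_lt htα) m n (-c) e1 hPz
          refine ⟨d + H t * d', e', ?_⟩
          rw [Finset.prod_range_succ]
          linear_combination hb + H t * he'
    have hmain := abstract_inter Q U1 U2 hQ0
      (hQrel U1 (Or.inl hU1)) (hQrel U2 (Or.inr hU2))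
      (fun m n a b hd => by
        obtain ⟨d, e, hde⟩ := P3 α le_rfl m n a b (by rwa [hQ] at hd)
        exact ⟨d, e, by rwa [← hQ] at hde⟩) m11 m12
    exact hmain
end
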